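/- arXiv:1908.01386 — 7 statements merged into one kernel-verified Lean document; each statement's English description precedes it below -/
import Mathlib

section
/- Let a ∈ ℝ with a ≠ 0, ξ ∈ ℝ, and H a Schwartz function on ℝ. The ODE (ξ+i) v' /(2πi) + a v = H (i.e., (ξ+i) D_x v + a v = H with D_x = (2πi)^{-1} d/dx) has a unique tempered-distribution solution; this solution is a Schwartz function and satisfies ‖v‖_{L¹} ≤ (⟨ξ⟩/|a|) ‖H‖_{L¹}, where ⟨ξ⟩ = (1+ξ²)^{1/2}. -/
open MeasureTheory Real Complex Filter FourierTransform Convolution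

lemma affine_inv_iteratedDeriv (c a : ℂ) (hne : ∀ η : ℝ, c * η + a ≠ 0) (n : ℕ) :
    iteratedDeriv n (fun η : ℝ => (c * η + a)⁻¹) =
      fun η : ℝ => (-1) ^ n * (Nat.factorial n) * c ^ n * (c * η + a) ^ (-(n : ℤ) - 1) := by
  induction n with
  | zero =>
    ext η
    simp [zpow_neg]
  | succ n ih =>
    rw [iteratedDeriv_succ, ih]
    ext η
    have hz : HasDerivAt (fun w : ℂ => (c * w + a) ^ (-(n : ℤ) - 1))
        ((-(n : ℤ) - 1) * (c * (η : ℂ) + a) ^ (-(n : ℤ) - 1 - 1) * c) (η : ℂ) := by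
      have h1 : HasDerivAt (fun w : ℂ => c * w + a) c (η : ℂ) := by
        simpa using ((hasDerivAt_id (η : ℂ)).const_mul c).add_const a
      have h2 := (hasDerivAt_zpow (-(n : ℤ) - 1) (c * (η : ℂ) + a) (Or.inl (hne η)))
      simpa [mul_comm, Function.comp_def] using (h2.comp (η : ℂ) h1)
    have hD : HasDerivAt (fun η : ℝ => (c * η + a) ^ (-(n : ℤ) - 1))
        ((-(n : ℤ) - 1) * (c * (η : ℂ) + a) ^ (-(n : ℤ) - 1 - 1) * c) η := hz.comp_ofReal
    have := (hD.const_mul ((-1) ^ n * ((Nat.factorial n) : ℂ) * c ^ n)).deriv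
    rw [deriv_const_mul _ hD.differentiableAt] at this ⊢
    · rw [hD.deriv]
      push_cast
      have hfac : (Nat.factorial (n+1) : ℂ) = ((Nat.factorial n) : ℂ) * (n + 1) := by
        push_cast [Nat.factorial_succ]; ring
      have hexp : (-(n : ℤ) - 1 - 1 : ℤ) = -((n : ℤ) + 1) - 1 := by ring
      rw [hfac, hexp]
      push_cast
      ring

lemma tg_affine_inv (c : ℂ) (a r : ℝ) (hr : 0 < r) (hlb : ∀ η : ℝ, r ≤ ‖c * η + a‖) :
    Function.HasTemperateGrowth fun η : ℝ => (c * η + a)⁻¹ := by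
  have hne : ∀ η : ℝ, c * (η : ℂ) + a ≠ 0 := by
    intro η h
    have := hlb η
    rw [h, norm_zero] at this
    linarith
  refine ⟨?_, fun n => ?_⟩
  · have h1 : ContDiff ℝ (⊤ : ℕ∞) fun η : ℝ => (c * (η : ℂ) + a) :=
      (contDiff_const.mul Complex.ofRealCLM.contDiff).add contDiff_const
    exact (h1.inv hne).of_le (mod_cast le_top)
  · refine ⟨0, (Nat.factorial n) * ‖c‖ ^ n * (r⁻¹) ^ (n + 1), fun η => ?_⟩
    rw [norm_iteratedFDeriv_eq_norm_iteratedDeriv, affine_inv_iteratedDeriv c a hne n]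
    simp only [pow_zero, mul_one, norm_mul, norm_pow, norm_neg, norm_one, one_pow, one_mul]
    have h1 : ‖(c * (η : ℂ) + a) ^ (-(n : ℤ) - 1)‖ ≤ (r⁻¹) ^ (n + 1) := by
      have he : (-(n : ℤ) - 1) = -((n + 1 : ℕ) : ℤ) := by push_cast; ring
      rw [norm_zpow, he, zpow_neg, zpow_natCast, ← inv_pow]
      apply pow_le_pow_left₀ (by positivity)
      exact inv_anti₀ hr (hlb η)
    have h2 : ‖(((Nat.factorial n) : ℂ))‖ = ((Nat.factorial n) : ℝ) := by
      simp [Complex.norm_natCast]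
    calc ‖(((Nat.factorial n) : ℂ))‖ * ‖c‖ ^ n * ‖(c * (η : ℂ) + a) ^ (-(n : ℤ) - 1)‖
        ≤ ((Nat.factorial n) : ℝ) * ‖c‖ ^ n * (r⁻¹) ^ (n + 1) := by
          rw [h2]
          gcongr
      _ ≤ _ := le_refl _

lemma ode_solver (c : ℂ) (a r : ℝ) (hr : 0 < r) (hlb : ∀ η : ℝ, r ≤ ‖c * η + a‖)
    (ψ : SchwartzMap ℝ ℂ) :
    ∃ φ : SchwartzMap ℝ ℂ, ∀ x : ℝ, c * (deriv φ x / (2 * π * Complex.I)) + a * φ x = ψ x := by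
  have hm := tg_affine_inv c a r hr hlb
  have hne : ∀ η : ℝ, c * (η : ℂ) + a ≠ 0 := by
    intro η h
    have := hlb η
    rw [h, norm_zero] at this
    linarith
  have h2pi : (2 * (π : ℂ) * Complex.I) ≠ 0 := by
    simp [Real.pi_ne_zero, Complex.I_ne_zero, Complex.ofReal_ne_zero]
  set g : SchwartzMap ℝ ℂ := SchwartzMap.bilinLeftCLM (ContinuousLinearMap.mul ℝ ℂ) hm
    ((FourierTransform.fourierCLE ℂ (SchwartzMap ℝ ℂ)) ψ) with hg
  set φ : SchwartzMap ℝ ℂ := (FourierTransform.fourierCLE ℂ (SchwartzMap ℝ ℂ)).symm g with hφ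
  have hFφ : (FourierTransform.fourierCLE ℂ (SchwartzMap ℝ ℂ)) φ = g :=
    (FourierTransform.fourierCLE ℂ (SchwartzMap ℝ ℂ)).apply_symm_apply g
  have hgapp : ∀ η : ℝ, g η = (𝓕 (⇑ψ) η) * (c * η + a)⁻¹ := fun η => rfl
  have hFφapp : ∀ η : ℝ, 𝓕 (⇑φ) η = (𝓕 (⇑ψ) η) * (c * η + a)⁻¹ := by
    intro η
    rw [← hgapp η, ← hFφ]
    rfl
  set L : SchwartzMap ℝ ℂ := (c / (2 * π * Complex.I)) • SchwartzMap.derivCLM ℂ ℂ φ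
      + (a : ℂ) • φ with hLdef
  have hderiv_int : Integrable (deriv (⇑φ)) := by
    have : deriv (⇑φ) = ⇑(SchwartzMap.derivCLM ℂ ℂ φ) := by
      ext x
      rw [SchwartzMap.derivCLM_apply]
    rw [this]
    exact (SchwartzMap.derivCLM ℂ ℂ φ).integrable
  have hFd : 𝓕 (deriv (⇑φ)) = fun η : ℝ => (2 * π * Complex.I * η) • 𝓕 (⇑φ) η :=
    Real.fourier_deriv φ.integrable φ.differentiable hderiv_int
  have hL : (FourierTransform.fourierCLE ℂ (SchwartzMap ℝ ℂ)) L = (FourierTransform.fourierCLE ℂ (SchwartzMap ℝ ℂ)) ψ := by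
    have hmap : (FourierTransform.fourierCLE ℂ (SchwartzMap ℝ ℂ)) L
        = (c / (2 * π * Complex.I)) • (FourierTransform.fourierCLE ℂ (SchwartzMap ℝ ℂ))
            (SchwartzMap.derivCLM ℂ ℂ φ)
          + (a : ℂ) • (FourierTransform.fourierCLE ℂ (SchwartzMap ℝ ℂ)) φ := by
      rw [hLdef]
      simp only [map_add, _root_.map_smul]
    ext η
    rw [hmap]
    simp only [SchwartzMap.add_apply, SchwartzMap.smul_apply, smul_eq_mul,
      FourierTransform.fourierCLE_apply, SchwartzMap.fourier_coe]
    have hco : ⇑(SchwartzMap.derivCLM ℂ ℂ φ) = deriv (⇑φ) := by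
      ext x
      rw [SchwartzMap.derivCLM_apply]
    rw [hco, hFd]
    simp only [smul_eq_mul]
    rw [hFφapp η]
    field_simp [hne η]
  have hLψ : L = ψ := (FourierTransform.fourierCLE ℂ (SchwartzMap ℝ ℂ)).injective hL
  refine ⟨φ, fun x => ?_⟩
  have := congrArg (fun f : SchwartzMap ℝ ℂ => f x) hLψ
  simp only [hLdef, SchwartzMap.add_apply, SchwartzMap.smul_apply, smul_eq_mul,
    SchwartzMap.derivCLM_apply] at this
  rw [← this]
  simp only [div_eq_mul_inv]
  ring

lemma ode_l1_bound (c : ℂ) (a : ℝ) (hpos : 0 < a * c.im) (v H : SchwartzMap ℝ ℂ)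
    (hode : ∀ x : ℝ, c * (deriv v x / (2 * π * Complex.I)) + a * v x = H x) :
    (∫ x : ℝ, ‖v x‖) ≤ (‖c‖ / (a * c.im)) * ∫ x : ℝ, ‖H x‖ := by
  have hc : c ≠ 0 := by
    intro h
    rw [h] at hpos
    simp at hpos
  have h2pi : (2 * (π : ℂ) * Complex.I) ≠ 0 := by
    simp [Real.pi_ne_zero, Complex.I_ne_zero, Complex.ofReal_ne_zero]
  set ρ : ℝ := 2 * π * a * c.im / Complex.normSq c with hρdef
  have hρ : 0 < ρ := by
    apply div_pos
    · have := Real.pi_pos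
      nlinarith
    · exact Complex.normSq_pos.2 hc
  set μ : ℂ := 2 * π * Complex.I * a / c with hμdef
  have hμre : μ.re = ρ := by
    rw [hμdef, Complex.div_re]
    simp [Complex.mul_re, Complex.mul_im, hρdef]
  have hxre : ∀ x : ℝ, (μ * x).re = ρ * x := by
    intro x
    rw [Complex.mul_re]
    simp [hμre]
  -- rearranged ODE
  have hd : ∀ x : ℝ, deriv v x = (2 * π * Complex.I / c) * H x - μ * v x := by
    intro x
    have h := hode x
    field_simp at h
    rw [hμdef, div_mul_eq_mul_div, div_mul_eq_mul_div, ← sub_div, eq_div_iff hc]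
    linear_combination h
  set F : ℝ → ℂ := fun x => Complex.exp (μ * x) * v x with hFdef
  have hF : ∀ x : ℝ, HasDerivAt F (Complex.exp (μ * x) * ((2 * π * Complex.I / c) * H x)) x := by
    intro x
    have h1 : HasDerivAt (fun y : ℝ => Complex.exp (μ * y)) (μ * Complex.exp (μ * x)) x := by
      have h2 : HasDerivAt (fun w : ℂ => Complex.exp (μ * w)) (μ * Complex.exp (μ * x)) (x : ℂ) := by
        have h2' := (Complex.hasDerivAt_exp (μ * (x : ℂ))).comp (x : ℂ)
          ((hasDerivAt_id (x : ℂ)).const_mul μ)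
        simpa [Function.comp_def, mul_comm] using h2'
      exact h2.comp_ofReal
    have h3 := h1.mul (v.differentiableAt.hasDerivAt)
    refine h3.congr_deriv ?_
    rw [hd x]
    ring
  have hM := fun x => v.norm_le_seminorm ℝ x
  have htends : Tendsto (fun x : ℝ => (SchwartzMap.seminorm ℝ 0 0) v * Real.exp (ρ * x))
      atBot (nhds 0) := by
    rw [show (0:ℝ) = (SchwartzMap.seminorm ℝ 0 0) v * 0 by ring]
    apply Tendsto.const_mul
    apply Real.tendsto_exp_atBot.comp
    exact (tendsto_const_mul_atBot_of_pos hρ).2 tendsto_id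
  have hFbot : Tendsto F atBot (nhds 0) := by
    refine squeeze_zero_norm (fun x => ?_) htends
    rw [hFdef]
    simp only [norm_mul, Complex.norm_exp, hxre]
    rw [mul_comm]
    gcongr
    exact hM x
  have hHcont : Continuous (fun s : ℝ => Complex.exp (μ * s) * ((2 * π * Complex.I / c) * H s)) :=
    (Complex.continuous_exp.comp (continuous_const.mul Complex.continuous_ofReal)).mul
      (continuous_const.mul H.continuous)
  have hnorm2pic : ‖2 * (π:ℂ) * Complex.I / c‖ = 2 * π / ‖c‖ := by
    rw [norm_div, norm_mul, norm_mul]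
    simp [abs_of_pos Real.pi_pos]
  have hnormint : ∀ s : ℝ, ‖Complex.exp (μ * s) * ((2 * π * Complex.I / c) * H s)‖
      = Real.exp (ρ * s) * (2 * π / ‖c‖ * ‖H s‖) := by
    intro s
    rw [norm_mul, norm_mul, hnorm2pic]
    simp only [Complex.norm_exp, hxre]
  have hInt : ∀ x : ℝ, IntegrableOn
      (fun s : ℝ => Complex.exp (μ * s) * ((2 * π * Complex.I / c) * H s)) (Set.Iic x) := by
    intro x
    apply Integrable.mono'
      ((H.integrable.norm.const_mul (Real.exp (ρ * x) * (2 * π / ‖c‖))).restrict)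
    · exact hHcont.aestronglyMeasurable.restrict
    · filter_upwards [ae_restrict_mem measurableSet_Iic] with s hs
      rw [hnormint s]
      have h5 : Real.exp (ρ * s) ≤ Real.exp (ρ * x) :=
        Real.exp_le_exp.2 (mul_le_mul_of_nonneg_left hs hρ.le)
      calc Real.exp (ρ * s) * (2 * π / ‖c‖ * ‖H s‖)
          ≤ Real.exp (ρ * x) * (2 * π / ‖c‖ * ‖H s‖) := by gcongr
        _ = Real.exp (ρ * x) * (2 * π / ‖c‖) * ‖H s‖ := by ring
  have hFval : ∀ x : ℝ, F x
      = ∫ s in Set.Iic x, Complex.exp (μ * s) * ((2 * π * Complex.I / c) * H s) := by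
    intro x
    have h6 := integral_Iic_of_hasDerivAt_of_tendsto' (fun s _ => hF s) (hInt x) hFbot
    rw [h6]
    ring
  have hcpos : (0:ℝ) < ‖c‖ := norm_pos_iff.2 hc
  set C : ℝ := 2 * π / ‖c‖ with hCdef
  have hCpos : 0 < C := by
    rw [hCdef]
    positivity
  set k : ℝ → ℝ := Set.indicator (Set.Ici (0:ℝ)) (fun t => C * Real.exp (-ρ * t)) with hkdef
  have hk_int : Integrable k := by
    rw [hkdef, integrable_indicator_iff measurableSet_Ici]
    rw [IntegrableOn, Measure.restrict_congr_set Ioi_ae_eq_Ici.symm]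
    exact (exp_neg_integrableOn_Ioi 0 hρ).const_mul C
  have hexp_tends : Tendsto (fun t : ℝ => -(Real.exp (-ρ * t) / ρ)) atTop (nhds 0) := by
    rw [show (0:ℝ) = -(0 / ρ) by simp]
    apply Tendsto.neg
    apply Tendsto.div_const
    have h10 : Tendsto (fun t : ℝ => ρ * t) atTop atTop :=
      (tendsto_const_mul_atTop_of_pos hρ).2 tendsto_id
    have := Real.tendsto_exp_neg_atTop_nhds_zero.comp h10
    simpa [Function.comp_def, neg_mul] using this
  have hderiv_exp : ∀ t : ℝ, HasDerivAt (fun t : ℝ => -(Real.exp (-ρ * t) / ρ))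
      (Real.exp (-ρ * t)) t := by
    intro t
    have h11 : HasDerivAt (fun t : ℝ => Real.exp (-ρ * t)) (Real.exp (-ρ * t) * (-ρ)) t := by
      have := (Real.hasDerivAt_exp (-ρ * t)).comp t ((hasDerivAt_id t).const_mul (-ρ))
      simpa [Function.comp_def, mul_comm] using this
    have h12 := (h11.div_const ρ).neg
    refine h12.congr_deriv ?_
    field_simp
  have hIoi : ∫ t in Set.Ioi (0:ℝ), Real.exp (-ρ * t) = 1 / ρ := by
    have h13 := integral_Ioi_of_hasDerivAt_of_tendsto' (fun t _ => hderiv_exp t)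
      (exp_neg_integrableOn_Ioi 0 hρ) hexp_tends
    rw [h13]
    simp
  have hk_val : ∫ t : ℝ, k t = C / ρ := by
    rw [hkdef, integral_indicator measurableSet_Ici,
      Measure.restrict_congr_set Ioi_ae_eq_Ici.symm, integral_const_mul, hIoi]
    field_simp
  -- pointwise bound via convolution
  have hvb : ∀ x : ℝ, ‖v x‖
      ≤ ((fun s : ℝ => ‖H s‖) ⋆[ContinuousLinearMap.lsmul ℝ ℝ] k) x := by
    intro x
    have hvx : v x = Complex.exp (-(μ * x)) * F x := by
      rw [hFdef]
      rw [← mul_assoc, ← Complex.exp_add, neg_add_cancel, Complex.exp_zero, one_mul]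
    have h9 : ‖v x‖ ≤ Real.exp (-(ρ * x)) * ∫ s in Set.Iic x, Real.exp (ρ * s) * (C * ‖H s‖) := by
      rw [hvx, norm_mul]
      have e1 : ‖Complex.exp (-(μ * x))‖ = Real.exp (-(ρ * x)) := by
        rw [Complex.norm_exp, Complex.neg_re, hxre]
      rw [e1]
      gcongr
      rw [hFval x]
      refine (norm_integral_le_integral_norm _).trans (le_of_eq ?_)
      apply setIntegral_congr_fun measurableSet_Iic
      intro s _
      simpa using hnormint s
    refine h9.trans (le_of_eq ?_)
    rw [← integral_const_mul]
    rw [show ((fun s : ℝ => ‖H s‖) ⋆[ContinuousLinearMap.lsmul ℝ ℝ] k) x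
      = ∫ s : ℝ, ‖H s‖ * k (x - s) by
        rw [convolution_def]
        simp only [ContinuousLinearMap.lsmul_apply, smul_eq_mul]]
    rw [← integral_indicator measurableSet_Iic]
    congr 1
    ext s
    by_cases hs : s ≤ x
    · rw [Set.indicator_of_mem (Set.mem_Iic.2 hs)]
      have hks : k (x - s) = C * Real.exp (-ρ * (x - s)) := by
        rw [hkdef, Set.indicator_of_mem (Set.mem_Ici.2 (sub_nonneg.2 hs))]
      rw [hks, show -ρ * (x - s) = -(ρ * x) + ρ * s by ring, Real.exp_add]
      ring
    · rw [Set.indicator_of_notMem (fun h => hs (Set.mem_Iic.1 h))]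
      have hks : k (x - s) = 0 := by
        rw [hkdef, Set.indicator_of_notMem]
        intro h
        exact hs (by simpa [sub_nonneg] using Set.mem_Ici.1 h)
      rw [hks, mul_zero]
  have hconv_int : Integrable ((fun s : ℝ => ‖H s‖) ⋆[ContinuousLinearMap.lsmul ℝ ℝ] k) :=
    (H.integrable.norm).integrable_convolution _ hk_int
  have hmono := integral_mono v.integrable.norm hconv_int hvb
  have hconvval : ∫ x : ℝ, ((fun s : ℝ => ‖H s‖) ⋆[ContinuousLinearMap.lsmul ℝ ℝ] k) x
      = (∫ s : ℝ, ‖H s‖) * (C / ρ) := by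
    rw [integral_convolution _ H.integrable.norm hk_int, hk_val]
    simp [smul_eq_mul]
  rw [hconvval] at hmono
  have hkey : C / ρ = ‖c‖ / (a * c.im) := by
    rw [hCdef, hρdef]
    have hnormsq : Complex.normSq c = ‖c‖ ^ 2 := by
      rw [Complex.normSq_eq_norm_sq]
    rw [hnormsq]
    have ha : a ≠ 0 := fun h => by simp [h] at hpos
    have him : c.im ≠ 0 := fun h => by simp [h] at hpos
    have habs : ‖c‖ ≠ 0 := by
      exact hcpos.ne'
    field_simp
  rw [hkey] at hmono
  refine hmono.trans (le_of_eq (by ring))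

lemma lb_aux (ξ a : ℝ) (ha : a ≠ 0) (η : ℝ) :
    |a| / Real.sqrt (1 + ξ ^ 2) ≤ ‖((ξ : ℂ) + Complex.I) * η + a‖ := by
  set z : ℂ := ((ξ : ℂ) + Complex.I) * η + a with hz
  have hre : z.re = ξ * η + a := by
    simp [hz, Complex.add_re, Complex.mul_re]
  have him : z.im = η := by
    simp [hz, Complex.add_im, Complex.mul_im]
  have hnorm : ‖z‖ ^ 2 = (ξ * η + a) ^ 2 + η ^ 2 := by
    rw [← hre, ← him, Complex.sq_norm, Complex.normSq_apply]
    ring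
  have hsq : a ^ 2 ≤ (1 + ξ ^ 2) * ‖z‖ ^ 2 := by
    rw [hnorm]
    nlinarith [sq_nonneg (ξ * (ξ * η + a) + η)]
  have hs : 0 < Real.sqrt (1 + ξ ^ 2) := Real.sqrt_pos.2 (by positivity)
  rw [div_le_iff₀ hs]
  rw [show |a| = Real.sqrt (a ^ 2) from (Real.sqrt_sq_eq_abs a).symm]
  calc Real.sqrt (a ^ 2) ≤ Real.sqrt ((1 + ξ ^ 2) * ‖z‖ ^ 2) := Real.sqrt_le_sqrt hsq
    _ = ‖z‖ * Real.sqrt (1 + ξ ^ 2) := by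
        rw [Real.sqrt_mul (by positivity), Real.sqrt_sq (norm_nonneg _)]
        ring

lemma normc_aux (ξ : ℝ) : ‖(ξ : ℂ) + Complex.I‖ = Real.sqrt (1 + ξ ^ 2) := by
  rw [Complex.norm_def, Complex.normSq_apply]
  simp only [Complex.add_re, Complex.ofReal_re, Complex.I_re, add_zero,
    Complex.add_im, Complex.ofReal_im, Complex.I_im, zero_add]
  congr 1
  ring

/-- The ODE `(ξ+i) D_x v + a v = H` (with `D_x = (2πi)⁻¹ d/dx`, `a ≠ 0`, `H` Schwartz) has a
unique tempered-distribution solution; this solution is given by a Schwartz function `v`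
satisfying `‖v‖_{L¹} ≤ (⟨ξ⟩/|a|)‖H‖_{L¹}`. -/
theorem stmt3 (a ξ : ℝ) (ha : a ≠ 0) (H : SchwartzMap ℝ ℂ) :
    ∃ v : SchwartzMap ℝ ℂ,
      (∀ x : ℝ, (ξ + Complex.I) * (deriv v x / (2 * π * Complex.I)) + a * v x = H x) ∧
      (∫ x : ℝ, ‖v x‖) ≤ (Real.sqrt (1 + ξ ^ 2) / |a|) * ∫ x : ℝ, ‖H x‖ ∧
      ∀ u : SchwartzMap ℝ ℂ →L[ℂ] ℂ,
        (∀ φ : SchwartzMap ℝ ℂ,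
          (ξ + Complex.I) * (-(u (SchwartzMap.derivCLM ℂ ℂ φ)) / (2 * π * Complex.I))
            + a * u φ = ∫ x : ℝ, H x * φ x) →
        ∀ φ : SchwartzMap ℝ ℂ, u φ = ∫ x : ℝ, v x * φ x := by
  have hs0 : (0 : ℝ) < Real.sqrt (1 + ξ ^ 2) := Real.sqrt_pos.2 (by positivity)
  have hrpos : 0 < |a| / Real.sqrt (1 + ξ ^ 2) := by positivity
  obtain ⟨v, hv⟩ := ode_solver ((ξ : ℂ) + Complex.I) a _ hrpos (lb_aux ξ a ha) H
  refine ⟨v, hv, ?_, ?_⟩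
  · -- L¹ bound
    rcases ha.lt_or_gt with hneg | hposa
    · -- a < 0
      set w : SchwartzMap ℝ ℂ := SchwartzMap.compCLMOfContinuousLinearEquiv ℂ
        (LinearIsometryEquiv.neg ℝ (E := ℝ)).toContinuousLinearEquiv v with hwdef
      set G : SchwartzMap ℝ ℂ := SchwartzMap.compCLMOfContinuousLinearEquiv ℂ
        (LinearIsometryEquiv.neg ℝ (E := ℝ)).toContinuousLinearEquiv H with hGdef
      have hwco : ⇑w = fun x : ℝ => v (-x) := by
        ext x
        simp [hwdef, SchwartzMap.compCLMOfContinuousLinearEquiv_apply]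
      have hGco : ⇑G = fun x : ℝ => H (-x) := by
        ext x
        simp [hGdef, SchwartzMap.compCLMOfContinuousLinearEquiv_apply]
      have hodew : ∀ x : ℝ, (-((ξ : ℂ) + Complex.I)) * (deriv w x / (2 * π * Complex.I))
          + a * w x = G x := by
        intro x
        rw [hwco, hGco, deriv_comp_neg]
        linear_combination hv (-x)
      have hpos2 : 0 < a * (-((ξ : ℂ) + Complex.I)).im := by
        simp only [Complex.neg_im, Complex.add_im, Complex.ofReal_im, Complex.I_im, zero_add]
        linarith
      have hb := ode_l1_bound (-((ξ : ℂ) + Complex.I)) a hpos2 w G hodew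
      have hwint : (∫ x : ℝ, ‖w x‖) = ∫ x : ℝ, ‖v x‖ := by
        rw [hwco]
        exact integral_neg_eq_self (fun x : ℝ => ‖v x‖) volume
      have hGint : (∫ x : ℝ, ‖G x‖) = ∫ x : ℝ, ‖H x‖ := by
        rw [hGco]
        exact integral_neg_eq_self (fun x : ℝ => ‖H x‖) volume
      rw [hwint, hGint] at hb
      have hconst : ‖-((ξ : ℂ) + Complex.I)‖ / (a * (-((ξ : ℂ) + Complex.I)).im)
          = Real.sqrt (1 + ξ ^ 2) / |a| := by
        rw [norm_neg, normc_aux]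
        simp only [Complex.neg_im, Complex.add_im, Complex.ofReal_im, Complex.I_im, zero_add]
        rw [abs_of_neg hneg]
        ring_nf
      rw [hconst] at hb
      exact hb
    · -- a > 0
      have hpos2 : 0 < a * ((ξ : ℂ) + Complex.I).im := by
        simp only [Complex.add_im, Complex.ofReal_im, Complex.I_im, zero_add]
        linarith
      have hb := ode_l1_bound ((ξ : ℂ) + Complex.I) a hpos2 v H hv
      have hconst : ‖(ξ : ℂ) + Complex.I‖ / (a * ((ξ : ℂ) + Complex.I).im)
          = Real.sqrt (1 + ξ ^ 2) / |a| := by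
        rw [normc_aux]
        simp only [Complex.add_im, Complex.ofReal_im, Complex.I_im, zero_add]
        rw [abs_of_pos hposa]
        ring_nf
      rw [hconst] at hb
      exact hb
  · -- uniqueness
    intro u hu φ
    have hlb' : ∀ η : ℝ, |a| / Real.sqrt (1 + ξ ^ 2) ≤ ‖(-((ξ : ℂ) + Complex.I)) * η + a‖ := by
      intro η
      have h1 := lb_aux ξ a ha (-η)
      have h2 : ((ξ : ℂ) + Complex.I) * (-η : ℝ) + a = (-((ξ : ℂ) + Complex.I)) * η + a := by
        push_cast
        ring
      rwa [h2] at h1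
    obtain ⟨θ, hθ⟩ := ode_solver (-((ξ : ℂ) + Complex.I)) a _ hrpos hlb' φ
    have hφeq : φ = (a : ℂ) • θ
        - (((ξ : ℂ) + Complex.I) / (2 * π * Complex.I)) • SchwartzMap.derivCLM ℂ ℂ θ := by
      ext x
      have h1 := hθ x
      simp only [SchwartzMap.sub_apply, SchwartzMap.smul_apply, smul_eq_mul,
        SchwartzMap.derivCLM_apply]
      rw [← h1]
      simp only [div_eq_mul_inv]
      ring
    have hu_val : u φ = ∫ x : ℝ, (H x : ℂ) * θ x := by
      rw [hφeq, map_sub, u.map_smul, u.map_smul]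
      have h1 := hu θ
      simp only [smul_eq_mul]
      rw [← h1]
      simp only [div_eq_mul_inv]
      ring
    -- integration by parts and linearity
    have hθ'c : deriv (⇑θ) = ⇑(SchwartzMap.derivCLM ℂ ℂ θ) := by
      ext x
      rw [SchwartzMap.derivCLM_apply]
    have hv'c : deriv (⇑v) = ⇑(SchwartzMap.derivCLM ℂ ℂ v) := by
      ext x
      rw [SchwartzMap.derivCLM_apply]
    have hbv : ∃ C, ∀ x : ℝ, ‖v x‖ ≤ C := ⟨_, fun x => v.norm_le_seminorm ℝ x⟩
    have hbv' : ∃ C, ∀ x : ℝ, ‖deriv v x‖ ≤ C := by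
      rw [hv'c]
      exact ⟨_, fun x => (SchwartzMap.derivCLM ℂ ℂ v).norm_le_seminorm ℝ x⟩
    have i1 : Integrable (fun x : ℝ => v x * θ x) :=
      θ.integrable.bdd_mul v.continuous.aestronglyMeasurable (ae_of_all _ hbv.choose_spec)
    have i2 : Integrable (fun x : ℝ => v x * deriv θ x) := by
      rw [hθ'c]
      exact (SchwartzMap.derivCLM ℂ ℂ θ).integrable.bdd_mul v.continuous.aestronglyMeasurable (ae_of_all _ hbv.choose_spec)
    have i3 : Integrable (fun x : ℝ => deriv v x * θ x) := by
      rw [hv'c]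
      exact θ.integrable.bdd_mul (SchwartzMap.derivCLM ℂ ℂ v).continuous.aestronglyMeasurable
        (ae_of_all _ fun x => (SchwartzMap.derivCLM ℂ ℂ v).norm_le_seminorm ℝ x)
    have hibp : (∫ x : ℝ, v x * deriv θ x) = -∫ x : ℝ, deriv v x * θ x := by
      exact integral_mul_deriv_eq_deriv_mul_of_integrable
        (fun x _ => v.differentiableAt.hasDerivAt) (fun x _ => θ.differentiableAt.hasDerivAt)
        i2 i3 i1
    have hv_val : (∫ x : ℝ, v x * φ x) = ∫ x : ℝ, (H x : ℂ) * θ x := by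
      calc (∫ x : ℝ, v x * φ x)
          = ∫ x : ℝ, ((a : ℂ) * (v x * θ x)
              - (((ξ : ℂ) + Complex.I) / (2 * π * Complex.I)) * (v x * deriv θ x)) := by
            congr 1
            ext x
            rw [hφeq]
            simp only [SchwartzMap.sub_apply, SchwartzMap.smul_apply, smul_eq_mul,
              SchwartzMap.derivCLM_apply]
            ring
        _ = (a : ℂ) * (∫ x : ℝ, v x * θ x)
              - (((ξ : ℂ) + Complex.I) / (2 * π * Complex.I)) * ∫ x : ℝ, v x * deriv θ x := by
            rw [integral_sub (i1.const_mul _) (i2.const_mul _), integral_const_mul,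
              integral_const_mul]
        _ = (a : ℂ) * (∫ x : ℝ, v x * θ x)
              + (((ξ : ℂ) + Complex.I) / (2 * π * Complex.I)) * ∫ x : ℝ, deriv v x * θ x := by
            rw [hibp]
            ring
        _ = ∫ x : ℝ, ((a : ℂ) * (v x * θ x)
              + (((ξ : ℂ) + Complex.I) / (2 * π * Complex.I)) * (deriv v x * θ x)) := by
            rw [integral_add (i1.const_mul _) (i3.const_mul _), integral_const_mul,
              integral_const_mul]
        _ = ∫ x : ℝ, (H x : ℂ) * θ x := by
            congr 1
            ext x
            rw [← hv x]
            simp only [div_eq_mul_inv]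
            ring
    rw [hu_val, hv_val]
end

section
/- Let a, ξ ∈ ℝ and H a Schwartz function on ℝ. The ODE (ξ+i) D_x v + a v = D_x H (with D_x = (2πi)^{-1} d/dx) has a unique Schwartz solution v, and it satisfies ‖v‖_{L¹} ≤ C ‖H‖_{L¹} with an absolute constant C independent of a, ξ, H. Moreover, if a ≠ 0 then v = D_x w for some Schwartz function w. -/
/-!
With `μ = 2πia/(ξ+i)` the equation reads `v' + μ v = (ξ+i)⁻¹ H'`. For `a > 0` we have
`Re μ > 0`, and the operator `T H (x) = ∫₀^∞ e^{-μt} H(x-t) dt` maps Schwartz functions to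
Schwartz functions, solves `(T H)' + μ T H = H`, and satisfies `‖T H‖₁ ≤ ‖H‖₁ / Re μ`
(Fubini). Hence `v = (ξ+i)⁻¹ (H - μ T H)` is a solution, and since `|μ| / Re μ = |ξ+i| ≥ 1`
it satisfies `‖v‖₁ ≤ 2 ‖H‖₁`. The reflection `x ↦ -x` exchanges `a` and `-a`, and for `a = 0`
the solution is `H / (ξ+i)`. If `u` is the difference of two solutions, `e^{μx} u(x)` is
constant and tends to `0` along a half-line on which `|e^{μx}| ≤ 1`, so `u = 0`. Finally, for
`a ≠ 0` the equation itself says `v = D_x w` with `w = (H - (ξ+i) v) / a`.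
-/

open MeasureTheory Real Complex Set Filter Topology
open scoped SchwartzMap

noncomputable section

lemma hasDerivAt_cexp_mul_ofReal (c : ℂ) (x : ℝ) :
    HasDerivAt (fun t : ℝ => cexp (c * t)) (c * cexp (c * x)) x := by
  simpa [mul_comm] using ((hasDerivAt_id (x : ℂ)).const_mul c).cexp.comp_ofReal

section ExpConv

variable {E : Type*} [NormedAddCommGroup E] [NormedSpace ℂ E] {μ : ℂ}

/-- `expConv μ f x = ∫_{-∞}^x e^{-μ(x-s)} f(s) ds`. -/
def expConv (μ : ℂ) (f : ℝ → E) (x : ℝ) : E :=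
  ∫ t in Ioi (0 : ℝ), cexp (-μ * t) • f (x - t)

lemma norm_cexp_neg_mul (μ : ℂ) (t : ℝ) : ‖cexp (-μ * t)‖ = Real.exp (-μ.re * t) := by
  simp [Complex.norm_exp]

lemma norm_cexp_neg_mul_smul_le {g : ℝ → E} {C : ℝ} (hC : ∀ t, ‖g t‖ ≤ C) (μ : ℂ) (t : ℝ) :
    ‖cexp (-μ * t) • g t‖ ≤ Real.exp (-μ.re * t) * C := by
  rw [norm_smul, norm_cexp_neg_mul]
  exact mul_le_mul_of_nonneg_left (hC t) (Real.exp_nonneg _)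

lemma integrableOn_cexp_neg_mul_smul (hμ : 0 < μ.re) {g : ℝ → E} (hg : Continuous g) {C : ℝ}
    (hC : ∀ t, ‖g t‖ ≤ C) : IntegrableOn (fun t : ℝ => cexp (-μ * t) • g t) (Ioi 0) :=
  ((exp_neg_integrableOn_Ioi 0 hμ).mul_const C).mono' (by fun_prop)
    (ae_of_all _ (norm_cexp_neg_mul_smul_le hC μ))

lemma integrableOn_expConv_integrand (hμ : 0 < μ.re) (f : 𝓢(ℝ, E)) (x : ℝ) :
    IntegrableOn (fun t : ℝ => cexp (-μ * t) • f (x - t)) (Ioi 0) :=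
  integrableOn_cexp_neg_mul_smul hμ (by fun_prop) fun _ => SchwartzMap.norm_le_seminorm ℝ f _

lemma hasDerivAt_expConv (hμ : 0 < μ.re) (f : 𝓢(ℝ, E)) (x : ℝ) :
    HasDerivAt (expConv μ f) (expConv μ (deriv f) x) x := by
  set f' := SchwartzMap.derivCLM ℝ E f
  have hf' : ∀ y, deriv f y = f' y := fun y => (SchwartzMap.derivCLM_apply ℝ f y).symm
  simp only [expConv, hf']
  refine (hasDerivAt_integral_of_dominated_loc_of_deriv_le univ_mem
    (F := fun (y t : ℝ) => cexp (-μ * t) • f (y - t))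
    (F' := fun (y t : ℝ) => cexp (-μ * t) • f' (y - t))
    (Eventually.of_forall fun y => (integrableOn_expConv_integrand hμ f y).aestronglyMeasurable)
    (integrableOn_expConv_integrand hμ f x)
    (integrableOn_expConv_integrand hμ f' x).aestronglyMeasurable
    (ae_of_all _ fun t y _ =>
      norm_cexp_neg_mul_smul_le (fun _ => SchwartzMap.norm_le_seminorm ℝ f' _) μ t)
    ((exp_neg_integrableOn_Ioi 0 hμ).mul_const _)
    (ae_of_all _ fun t y _ => ?_)).2
  rw [← hf']
  exact ((f.hasDerivAt (y - t)).comp_sub_const y t).const_smul _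

lemma expConv_deriv [CompleteSpace E] (hμ : 0 < μ.re) (f : 𝓢(ℝ, E)) (x : ℝ) :
    expConv μ (deriv f) x = f x - μ • expConv μ f x := by
  set F : ℝ → E := fun t => cexp (-μ * t) • f (x - t)
  set G : ℝ → E := fun t => cexp (-μ * t) • deriv f (x - t)
  have hF : ∀ t ∈ Ici (0 : ℝ), HasDerivAt F (-(μ • F t + G t)) t := by
    intro t _
    refine ((hasDerivAt_cexp_mul_ofReal (-μ) t).smul ((f.hasDerivAt (x - t)).comp_const_sub x t)).congr_deriv ?_
    dsimp only [F, G]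
    rw [smul_neg, mul_smul, neg_smul]
    abel
  have hFi : IntegrableOn F (Ioi 0) := integrableOn_expConv_integrand hμ f x
  have hGi : IntegrableOn G (Ioi 0) := by
    simpa only [SchwartzMap.derivCLM_apply] using
      integrableOn_expConv_integrand hμ (SchwartzMap.derivCLM ℝ E f) x
  have hlim : Tendsto F atTop (𝓝 0) := by
    have hexp : Tendsto (fun t : ℝ => Real.exp (-μ.re * t)) atTop (𝓝 0) :=
      Real.tendsto_exp_atBot.comp (tendsto_id.const_mul_atTop_of_neg (neg_lt_zero.mpr hμ))
    have hbound := hexp.mul_const (SchwartzMap.seminorm ℝ 0 0 f)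
    rw [zero_mul] at hbound
    exact squeeze_zero_norm
      (norm_cexp_neg_mul_smul_le (fun _ => SchwartzMap.norm_le_seminorm ℝ f _) μ) hbound
  have key := integral_Ioi_of_hasDerivAt_of_tendsto' hF ((hFi.smul μ).add hGi).neg hlim
  rw [integral_neg, integral_add (f := fun t => μ • F t) (hFi.smul μ) hGi, integral_smul] at key
  simp only [F, Complex.ofReal_zero, mul_zero, Complex.exp_zero, one_smul, sub_zero, zero_sub,
    neg_inj] at key
  exact eq_sub_of_add_eq' key

lemma hasDerivAt_expConv_self [CompleteSpace E] (hμ : 0 < μ.re) (f : 𝓢(ℝ, E)) (x : ℝ) :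
    HasDerivAt (expConv μ f) (f x - μ • expConv μ f x) x :=
  expConv_deriv hμ f x ▸ hasDerivAt_expConv hμ f x

lemma integrableOn_pow_mul_exp_neg_mul (k : ℕ) {b : ℝ} (hb : 0 < b) :
    IntegrableOn (fun t : ℝ => t ^ k * Real.exp (-b * t)) (Ioi 0) := by
  have hk : (-1 : ℝ) < k := by linarith [(k.cast_nonneg : (0 : ℝ) ≤ k)]
  refine (integrableOn_rpow_mul_exp_neg_mul_rpow (p := 1) hk one_pos hb).congr_fun
    (fun t _ => ?_) measurableSet_Ioi
  simp [Real.rpow_natCast]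

lemma norm_pow_mul_expConv_le (hμ : 0 < μ.re) (f : 𝓢(ℝ, E)) (k : ℕ) (x : ℝ) :
    ‖x‖ ^ k * ‖expConv μ f x‖ ≤ ∫ t in Ioi (0 : ℝ), 2 ^ (k - 1) *
      (t ^ k * SchwartzMap.seminorm ℝ 0 0 f + SchwartzMap.seminorm ℝ k 0 f) *
        Real.exp (-μ.re * t) := by
  set S₀ := SchwartzMap.seminorm ℝ 0 0 f
  set Sₖ := SchwartzMap.seminorm ℝ k 0 f
  have hint : IntegrableOn (fun t : ℝ => 2 ^ (k - 1) * (t ^ k * S₀ + Sₖ) * Real.exp (-μ.re * t))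
      (Ioi 0) := by
    refine IntegrableOn.congr_fun ((((integrableOn_pow_mul_exp_neg_mul k hμ).mul_const S₀).add
      ((exp_neg_integrableOn_Ioi 0 hμ).const_mul Sₖ)).const_mul (2 ^ (k - 1)))
      (fun t _ => by simp only [Pi.add_apply]; ring) measurableSet_Ioi
  rw [← norm_norm x, ← norm_pow, ← norm_smul, expConv, ← integral_smul]
  refine norm_integral_le_of_norm_le hint ((ae_restrict_iff' measurableSet_Ioi).mpr
    (ae_of_all _ fun t ht => ?_))
  have hx : ‖x‖ ≤ t + ‖x - t‖ := by
    simpa [Real.norm_of_nonneg (le_of_lt ht)] using norm_add_le t (x - t)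
  have hxk : ‖x‖ ^ k ≤ 2 ^ (k - 1) * (t ^ k + ‖x - t‖ ^ k) :=
    (pow_le_pow_left₀ (norm_nonneg x) hx k).trans (add_pow_le (le_of_lt ht) (norm_nonneg _) k)
  have hf₀ := SchwartzMap.norm_le_seminorm ℝ f (x - t)
  have hfₖ := SchwartzMap.norm_pow_mul_le_seminorm ℝ f k (x - t)
  rw [norm_smul, norm_smul, norm_cexp_neg_mul, norm_pow, norm_norm]
  calc ‖x‖ ^ k * (Real.exp (-μ.re * t) * ‖f (x - t)‖)
      ≤ 2 ^ (k - 1) * (t ^ k + ‖x - t‖ ^ k) * ‖f (x - t)‖ * Real.exp (-μ.re * t) := by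
        rw [mul_comm (Real.exp _), ← mul_assoc]
        gcongr
    _ ≤ 2 ^ (k - 1) * (t ^ k * S₀ + Sₖ) * Real.exp (-μ.re * t) := by
        have hfx : (t ^ k + ‖x - t‖ ^ k) * ‖f (x - t)‖ ≤ t ^ k * S₀ + Sₖ := by
          rw [add_mul]
          exact add_le_add (mul_le_mul_of_nonneg_left hf₀ (pow_nonneg (le_of_lt ht) k)) hfₖ
        rw [mul_assoc (2 ^ (k - 1) : ℝ)]
        gcongr

lemma iteratedDeriv_expConv (hμ : 0 < μ.re) (n : ℕ) (f : 𝓢(ℝ, E)) :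
    iteratedDeriv n (expConv μ f) = expConv μ ((SchwartzMap.derivCLM ℝ E)^[n] f) := by
  induction n generalizing f with
  | zero => rfl
  | succ n ih =>
    have hderiv : deriv (expConv μ f) = expConv μ (SchwartzMap.derivCLM ℝ E f) :=
      funext fun x => (hasDerivAt_expConv hμ f x).deriv
    rw [iteratedDeriv_succ', hderiv, ih, Function.iterate_succ_apply]

lemma exists_schwartzMap_eq_expConv (hμ : 0 < μ.re) (f : 𝓢(ℝ, E)) :
    ∃ g : 𝓢(ℝ, E), ⇑g = expConv μ f := by
  refine ⟨⟨expConv μ f, ?_, fun k n => ⟨_, fun x => by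
    rw [norm_iteratedFDeriv_eq_norm_iteratedDeriv, iteratedDeriv_expConv hμ]
    exact norm_pow_mul_expConv_le hμ _ k x⟩⟩, rfl⟩
  refine contDiff_of_differentiable_iteratedDeriv fun n _ => ?_
  rw [iteratedDeriv_expConv hμ]
  exact fun x => (hasDerivAt_expConv hμ _ x).differentiableAt

lemma integral_norm_expConv_le (hμ : 0 < μ.re) {f : ℝ → E} (hf : Integrable f) :
    ∫ x, ‖expConv μ f x‖ ≤ (μ.re)⁻¹ * ∫ x, ‖f x‖ := by
  set K : ℝ → ℂ := (Ioi 0).indicator fun t => cexp (-μ * t)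
  have hK : Integrable K := (integrable_indicator_iff measurableSet_Ioi).mpr
    (integrableOn_exp_mul_complex_Ioi (a := -μ) (by simpa using hμ) 0)
  have hKf : Integrable (fun p : ℝ × ℝ => ‖K p.2 • f (p.1 - p.2)‖) (volume.prod volume) :=
    (hK.convolution_integrand (ContinuousLinearMap.lsmul ℝ ℂ) hf).norm
  have hnorm_K : ∫ t, ‖K t‖ = (μ.re)⁻¹ := by
    simp_rw [K, norm_indicator_eq_indicator_norm, norm_cexp_neg_mul]
    rw [integral_indicator measurableSet_Ioi, integral_exp_mul_Ioi (by simpa using hμ)]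
    simp
  calc ∫ x, ‖expConv μ f x‖ ≤ ∫ x, ∫ t, ‖K t • f (x - t)‖ := by
        refine integral_mono_of_nonneg (ae_of_all _ fun x => norm_nonneg _)
          hKf.integral_prod_left (ae_of_all _ fun x => ?_)
        simp only [expConv]
        rw [← integral_indicator measurableSet_Ioi, indicator_smul_left]
        exact norm_integral_le_integral_norm _
    _ = ∫ t, ∫ x, ‖K t • f (x - t)‖ := integral_integral_swap hKf
    _ = (μ.re)⁻¹ * ∫ x, ‖f x‖ := by
        simp_rw [norm_smul, integral_const_mul, integral_sub_right_eq_self (fun x => ‖f x‖)]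
        rw [integral_mul_const, hnorm_K]

lemma integral_norm_sub_smul_expConv_le (hμ : 0 < μ.re) (f : 𝓢(ℝ, E)) :
    ∫ x, ‖f x - μ • expConv μ f x‖ ≤ (1 + ‖μ‖ / μ.re) * ∫ x, ‖f x‖ := by
  obtain ⟨g, hg⟩ := exists_schwartzMap_eq_expConv hμ f
  have hTf : Integrable fun x => ‖expConv μ f x‖ := hg ▸ g.integrable.norm
  calc ∫ x, ‖f x - μ • expConv μ f x‖ ≤ ∫ x, (‖f x‖ + ‖μ‖ * ‖expConv μ f x‖) := by
        refine integral_mono_of_nonneg (ae_of_all _ fun x => norm_nonneg _)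
          (f.integrable.norm.add (hTf.const_mul _)) (ae_of_all _ fun x => ?_)
        simpa only [norm_smul] using norm_sub_le (f x) (μ • expConv μ f x)
    _ ≤ (∫ x, ‖f x‖) + ‖μ‖ * ((μ.re)⁻¹ * ∫ x, ‖f x‖) := by
        rw [integral_add f.integrable.norm (hTf.const_mul _), integral_const_mul]
        gcongr
        exact integral_norm_expConv_le hμ f.integrable
    _ = (1 + ‖μ‖ / μ.re) * ∫ x, ‖f x‖ := by ring

end ExpConv

lemma eq_zero_of_hasDerivAt_neg_smul {E : Type*} [NormedAddCommGroup E] [NormedSpace ℂ E]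
    {μ : ℂ} {u : ℝ → E} (hu : ∀ x, HasDerivAt u (-μ • u x) x)
    (hlim : Tendsto u (cocompact ℝ) (𝓝 0)) : u = 0 := by
  set F : ℝ → E := fun x => cexp (μ * x) • u x
  have hF : ∀ x, HasDerivAt F 0 x := by
    intro x
    refine ((hasDerivAt_cexp_mul_ofReal μ x).smul (hu x)).congr_deriv ?_
    rw [smul_smul, ← add_smul, mul_neg, mul_comm, neg_add_cancel, zero_smul]
  have hconst : ∀ x, F x = F 0 := fun x =>
    is_const_of_deriv_eq_zero (fun y => (hF y).differentiableAt) (fun y => (hF y).deriv) x 0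
  have hF0 : ∀ l : Filter ℝ, l.NeBot → l ≤ cocompact ℝ → (∀ᶠ x in l, μ.re * x ≤ 0) →
      F 0 = 0 := by
    intro l _ hl hneg
    refine tendsto_nhds_unique (l := l) (f := F)
      (tendsto_const_nhds.congr fun x => (hconst x).symm) ?_
    refine squeeze_zero_norm' (hneg.mono fun x hx => ?_) (by simpa using (hlim.mono_left hl).norm)
    rw [norm_smul, Complex.norm_exp]
    exact mul_le_of_le_one_left (norm_nonneg _) (Real.exp_le_one_iff.mpr (by simpa using hx))
  have hzero : F 0 = 0 := by
    rcases le_total 0 μ.re with h | h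
    · exact hF0 atBot inferInstance atBot_le_cocompact
        ((eventually_le_atBot 0).mono fun x hx => mul_nonpos_of_nonneg_of_nonpos h hx)
    · exact hF0 atTop inferInstance atTop_le_cocompact
        ((eventually_ge_atTop 0).mono fun x hx => mul_nonpos_of_nonpos_of_nonneg h hx)
  funext x
  have := hconst x
  rw [hzero, smul_eq_zero] at this
  exact this.resolve_left (Complex.exp_ne_zero _)

def IsODESolution (a ξ : ℝ) (H v : 𝓢(ℝ, ℂ)) : Prop :=
  ∀ x : ℝ, (ξ + Complex.I) * (deriv v x / (2 * π * Complex.I)) + a * v x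
    = deriv H x / (2 * π * Complex.I)

def odeRate (a ξ : ℝ) : ℂ := 2 * π * I * a / (ξ + I)

lemma ofReal_add_I_ne_zero (ξ : ℝ) : (ξ + I : ℂ) ≠ 0 := by
  intro h
  simpa using congrArg Complex.im h

lemma one_le_norm_ofReal_add_I (ξ : ℝ) : 1 ≤ ‖(ξ + I : ℂ)‖ := by
  simpa using Complex.abs_im_le_norm (ξ + I : ℂ)

lemma isODESolution_iff {a ξ : ℝ} {H v : 𝓢(ℝ, ℂ)} :
    IsODESolution a ξ H v ↔ ∀ x, (ξ + I) * deriv v x + 2 * π * I * a * v x = deriv H x := by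
  have h2πI : (2 * π * I : ℂ) ≠ 0 := by simp [Real.pi_ne_zero, I_ne_zero]
  refine forall_congr' fun x => ?_
  rw [← mul_right_inj' h2πI]
  constructor <;> intro h <;> field_simp at h ⊢ <;> linear_combination h

lemma isODESolution_iff_odeRate {a ξ : ℝ} {H v : 𝓢(ℝ, ℂ)} :
    IsODESolution a ξ H v ↔
      ∀ x, deriv v x + odeRate a ξ * v x = (ξ + I : ℂ)⁻¹ * deriv H x := by
  have hζ := ofReal_add_I_ne_zero ξ
  rw [isODESolution_iff]
  refine forall_congr' fun x => ?_
  rw [odeRate, ← mul_right_inj' hζ]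
  constructor <;> intro h <;> field_simp at h ⊢ <;> linear_combination h

lemma odeRate_re (a ξ : ℝ) : (odeRate a ξ).re = 2 * π * a / ‖(ξ + I : ℂ)‖ ^ 2 := by
  rw [odeRate, Complex.div_re, Complex.sq_norm]
  simp [Complex.normSq_apply]

lemma norm_odeRate (a ξ : ℝ) : ‖odeRate a ξ‖ = 2 * π * |a| / ‖(ξ + I : ℂ)‖ := by
  simp [odeRate, abs_of_pos Real.pi_pos]

lemma odeRate_re_pos {a : ℝ} (ha : 0 < a) (ξ : ℝ) : 0 < (odeRate a ξ).re := by
  rw [odeRate_re]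
  have := one_le_norm_ofReal_add_I ξ
  positivity

lemma norm_odeRate_div_re {a : ℝ} (ha : 0 < a) (ξ : ℝ) :
    ‖odeRate a ξ‖ / (odeRate a ξ).re = ‖(ξ + I : ℂ)‖ := by
  have := one_le_norm_ofReal_add_I ξ
  rw [norm_odeRate, odeRate_re, abs_of_pos ha]
  field_simp

lemma exists_isODESolution_of_pos {a : ℝ} (ha : 0 < a) (ξ : ℝ) (H : 𝓢(ℝ, ℂ)) :
    ∃ v, IsODESolution a ξ H v ∧ ∫ x, ‖v x‖ ≤ 2 * ∫ x, ‖H x‖ := by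
  set μ := odeRate a ξ
  set ζ : ℂ := ξ + I
  have hμ : 0 < μ.re := odeRate_re_pos ha ξ
  obtain ⟨g, hg⟩ := exists_schwartzMap_eq_expConv hμ H
  have hv : ⇑(ζ⁻¹ • (H - μ • g)) = fun y => ζ⁻¹ * (H y - μ * expConv μ H y) := by
    ext y
    simp [hg]
  refine ⟨ζ⁻¹ • (H - μ • g), isODESolution_iff_odeRate.mpr fun x => ?_, ?_⟩
  · have hderiv : HasDerivAt (fun y => ζ⁻¹ * (H y - μ * expConv μ H y))
        (ζ⁻¹ * (deriv H x - μ * (H x - μ * expConv μ H x))) x :=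
      ((H.hasDerivAt x).sub ((hasDerivAt_expConv_self hμ H x).const_mul μ)).const_mul ζ⁻¹
    rw [hv, hderiv.deriv]
    ring
  · have hζ : 1 ≤ ‖ζ‖ := one_le_norm_ofReal_add_I ξ
    have hratio : ‖μ‖ / μ.re = ‖ζ‖ := norm_odeRate_div_re ha ξ
    calc ∫ x, ‖(ζ⁻¹ • (H - μ • g)) x‖ = ‖ζ‖⁻¹ * ∫ x, ‖H x - μ • expConv μ H x‖ := by
          simp_rw [hv, norm_mul, norm_inv, smul_eq_mul]
          exact integral_const_mul _ _
      _ ≤ ‖ζ‖⁻¹ * ((1 + ‖μ‖ / μ.re) * ∫ x, ‖H x‖) := by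
          gcongr
          exact integral_norm_sub_smul_expConv_le hμ H
      _ = (‖ζ‖⁻¹ + 1) * ∫ x, ‖H x‖ := by
          rw [hratio]
          field_simp [(by linarith : ‖ζ‖ ≠ 0)]
      _ ≤ 2 * ∫ x, ‖H x‖ := by
          gcongr
          linarith [inv_le_one_of_one_le₀ hζ]

lemma exists_isODESolution_zero (ξ : ℝ) (H : 𝓢(ℝ, ℂ)) :
    ∃ v, IsODESolution 0 ξ H v ∧ ∫ x, ‖v x‖ ≤ 2 * ∫ x, ‖H x‖ := by
  set ζ : ℂ := ξ + I
  have hv : ⇑(ζ⁻¹ • H) = fun y => ζ⁻¹ * H y := by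
    ext y
    simp
  refine ⟨ζ⁻¹ • H, isODESolution_iff_odeRate.mpr fun x => ?_, ?_⟩
  · rw [hv, deriv_const_mul _ (H.differentiableAt)]
    simp [odeRate, ζ]
  · have hζ : ‖ζ‖⁻¹ ≤ 2 := (inv_le_one_of_one_le₀ (one_le_norm_ofReal_add_I ξ)).trans one_le_two
    simp_rw [hv, norm_mul, norm_inv]
    rw [integral_const_mul]
    gcongr

def reflect {E : Type*} [NormedAddCommGroup E] [NormedSpace ℝ E] : 𝓢(ℝ, E) →L[ℝ] 𝓢(ℝ, E) :=
  SchwartzMap.compCLMOfContinuousLinearEquiv ℝ (ContinuousLinearEquiv.neg ℝ)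

lemma coe_reflect {E : Type*} [NormedAddCommGroup E] [NormedSpace ℝ E] (f : 𝓢(ℝ, E)) :
    ⇑(reflect f) = fun x => f (-x) := rfl

lemma IsODESolution.reflect {a ξ : ℝ} {H u : 𝓢(ℝ, ℂ)}
    (h : IsODESolution (-a) ξ (reflect H) u) : IsODESolution a ξ H (reflect u) := by
  intro x
  have hx := h (-x)
  simp only [coe_reflect, deriv_comp_neg, neg_neg] at hx ⊢
  push_cast at hx
  linear_combination -hx

lemma exists_isODESolution (a ξ : ℝ) (H : 𝓢(ℝ, ℂ)) :
    ∃ v, IsODESolution a ξ H v ∧ ∫ x, ‖v x‖ ≤ 2 * ∫ x, ‖H x‖ := by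
  rcases lt_trichotomy a 0 with ha | rfl | ha
  · obtain ⟨u, hu, hbound⟩ := exists_isODESolution_of_pos (neg_pos.mpr ha) ξ (reflect H)
    refine ⟨reflect u, hu.reflect, ?_⟩
    simpa only [coe_reflect, integral_neg_eq_self (fun x => ‖_‖)] using hbound
  · exact exists_isODESolution_zero ξ H
  · exact exists_isODESolution_of_pos ha ξ H

lemma IsODESolution.unique {a ξ : ℝ} {H v₁ v₂ : 𝓢(ℝ, ℂ)} (h₁ : IsODESolution a ξ H v₁)
    (h₂ : IsODESolution a ξ H v₂) : v₁ = v₂ := by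
  rw [isODESolution_iff_odeRate] at h₁ h₂
  have hzero : (fun x => v₁ x - v₂ x) = 0 := by
    refine eq_zero_of_hasDerivAt_neg_smul (μ := odeRate a ξ) (fun x => ?_)
      (by simpa using v₁.tendsto_cocompact.sub v₂.tendsto_cocompact)
    refine ((v₁.hasDerivAt x).sub (v₂.hasDerivAt x)).congr_deriv ?_
    rw [smul_eq_mul]
    linear_combination h₁ x - h₂ x
  ext x
  exact sub_eq_zero.mp (congrFun hzero x)

lemma IsODESolution.exists_eq_deriv_div {a ξ : ℝ} {H v : 𝓢(ℝ, ℂ)} (ha : a ≠ 0)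
    (h : IsODESolution a ξ H v) : ∃ w : 𝓢(ℝ, ℂ), ∀ x, v x = deriv w x / (2 * π * I) := by
  set ζ : ℂ := ξ + I
  have hw : ⇑((a : ℂ)⁻¹ • (H - ζ • v)) = fun y => (a : ℂ)⁻¹ * (H y - ζ * v y) := by
    ext y
    simp
  refine ⟨(a : ℂ)⁻¹ • (H - ζ • v), fun x => ?_⟩
  have hderiv : HasDerivAt (fun y => (a : ℂ)⁻¹ * (H y - ζ * v y))
      ((a : ℂ)⁻¹ * (deriv H x - ζ * deriv v x)) x :=
    ((H.hasDerivAt x).sub ((v.hasDerivAt x).const_mul ζ)).const_mul _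
  have ha' : (a : ℂ) ≠ 0 := Complex.ofReal_ne_zero.mpr ha
  have h2πI : (2 * π * I : ℂ) ≠ 0 := by simp [Real.pi_ne_zero, I_ne_zero]
  rw [hw, hderiv.deriv, ← isODESolution_iff.mp h x, add_sub_cancel_left]
  field_simp

end

open MeasureTheory Real

/-- The ODE `(ξ+i) D_x v + a v = D_x H` has a unique Schwartz solution `v`, satisfying
`‖v‖_{L¹} ≤ C ‖H‖_{L¹}` with an absolute constant; moreover if `a ≠ 0` then `v = D_x w`
for some Schwartz `w`. -/
theorem stmt4 : ∃ C : ℝ, 0 < C ∧ ∀ (a ξ : ℝ) (H : SchwartzMap ℝ ℂ),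
    (∃! v : SchwartzMap ℝ ℂ, ∀ x : ℝ,
        (ξ + Complex.I) * (deriv v x / (2 * π * Complex.I)) + a * v x
          = deriv H x / (2 * π * Complex.I)) ∧
    ∀ v : SchwartzMap ℝ ℂ,
      (∀ x : ℝ, (ξ + Complex.I) * (deriv v x / (2 * π * Complex.I)) + a * v x
          = deriv H x / (2 * π * Complex.I)) →
      (∫ x : ℝ, ‖v x‖) ≤ C * (∫ x : ℝ, ‖H x‖) ∧
      (a ≠ 0 → ∃ w : SchwartzMap ℝ ℂ, ∀ x : ℝ, v x = deriv w x / (2 * π * Complex.I)) := by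
  refine ⟨2, two_pos, fun a ξ H => ?_⟩
  obtain ⟨v₀, hv₀, hbound⟩ := exists_isODESolution a ξ H
  refine ⟨⟨v₀, hv₀, fun v (hv : IsODESolution a ξ H v) => hv.unique hv₀⟩,
    fun v (hv : IsODESolution a ξ H v) => ⟨?_, fun ha => hv.exists_eq_deriv_div ha⟩⟩
  rwa [hv.unique hv₀]
end

section
/- For λ > 0 and τ ∈ ℝ with |τ| ≠ λ, the integral g_τ(x, λ) = ∫_ℝ e^{2πi x ξ}/((ξ+iτ)² + λ²) dξ, for τ > 0, equals (π e^{2πτx}/λ)(e^{−2πλ|x|} − e^{−2πλx}) if 0 < λ < τ, and (π e^{2πτx}/λ) e^{−2πλ|x|} if λ > τ. -/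
/-!
Instead of shifting the contour, recognise the integrand as a Fourier transform. The one-sided
exponential `v ↦ e^{av}` on `v ≤ 0` (for `Re a > 0`), resp. `v ↦ -e^{av}` on `v > 0` (for
`Re a < 0`), has Fourier transform `w ↦ (a - 2πiw)⁻¹`, and by partial fractions
`((w + iτ)² + λ²)⁻¹ = (π/λ) ((2π(τ+λ) - 2πiw)⁻¹ - (2π(τ-λ) - 2πiw)⁻¹)`.
Fourier inversion then evaluates the integral as the corresponding combination of one-sided
exponentials at `x`. The sign of `τ - λ` decides on which half-line the second exponential
lives, which produces the two formulas.
-/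

open Real MeasureTheory Set FourierTransform

noncomputable def oneSidedExp (a : ℂ) : ℝ → ℂ :=
  if 0 < a.re then (Iic (0 : ℝ)).indicator fun v ↦ Complex.exp (a * v)
  else -(Ioi (0 : ℝ)).indicator fun v ↦ Complex.exp (a * v)

theorem integrable_oneSidedExp {a : ℂ} (ha : a.re ≠ 0) : Integrable (oneSidedExp a) := by
  unfold oneSidedExp
  split_ifs with h
  · exact (integrable_indicator_iff measurableSet_Iic).2 (integrableOn_exp_mul_complex_Iic h 0)
  · exact ((integrable_indicator_iff measurableSet_Ioi).2
      (integrableOn_exp_mul_complex_Ioi ((not_lt.1 h).lt_of_ne ha) 0)).neg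

theorem fourier_indicator_cexp_mul {s : Set ℝ} (hs : MeasurableSet s) (a : ℂ) (w : ℝ) :
    𝓕 (s.indicator fun v : ℝ ↦ Complex.exp (a * v)) w =
      ∫ v in s, Complex.exp ((a - 2 * π * w * Complex.I) * v) := by
  rw [Real.fourier_real_eq_integral_exp_smul, ← integral_indicator hs]
  congr 1 with v
  by_cases hv : v ∈ s
  · simp only [indicator_of_mem hv, smul_eq_mul, ← Complex.exp_add]
    push_cast
    ring_nf
  · simp [hv]

theorem fourier_oneSidedExp {a : ℂ} (ha : a.re ≠ 0) (w : ℝ) :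
    𝓕 (oneSidedExp a) w = (a - 2 * π * w * Complex.I)⁻¹ := by
  have hre : (a - 2 * π * w * Complex.I).re = a.re := by simp
  unfold oneSidedExp
  split_ifs with h
  · rw [fourier_indicator_cexp_mul measurableSet_Iic,
      integral_exp_mul_complex_Iic (hre ▸ h)]
    simp
  · rw [Real.fourier_real_eq_integral_exp_smul]
    simp only [Pi.neg_apply, smul_neg, integral_neg]
    rw [← Real.fourier_real_eq_integral_exp_smul, fourier_indicator_cexp_mul measurableSet_Ioi,
      integral_exp_mul_complex_Ioi (hre ▸ (not_lt.1 h).lt_of_ne ha)]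
    simp [neg_div]

theorem Real.fourier_smul_sub {V E : Type*} [NormedAddCommGroup V] [InnerProductSpace ℝ V]
    [MeasurableSpace V] [BorelSpace V] [FiniteDimensional ℝ V] [NormedAddCommGroup E]
    [NormedSpace ℂ E] {f g : V → E} (hf : Integrable f) (hg : Integrable g) (c : ℂ) :
    𝓕 (c • (f - g)) = c • (𝓕 f - 𝓕 g) := by
  ext w
  simp only [Real.fourier_eq, Pi.smul_apply, Pi.sub_apply]
  rw [← integral_sub ((Real.fourierIntegral_convergent_iff w).2 hf)
    ((Real.fourierIntegral_convergent_iff w).2 hg), ← integral_smul]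
  simp only [smul_sub, smul_comm c]

theorem add_I_mul_sq_add_sq (lam τ w : ℝ) :
    ((w : ℂ) + Complex.I * τ) ^ 2 + (lam : ℂ) ^ 2 =
      ((w : ℂ) + (τ + lam : ℝ) * Complex.I) * ((w : ℂ) + (τ - lam : ℝ) * Complex.I) := by
  push_cast
  linear_combination (lam : ℂ) ^ 2 * Complex.I_sq

theorem ofReal_add_mul_I_ne_zero (w : ℝ) {b : ℝ} (hb : b ≠ 0) : (w : ℂ) + b * Complex.I ≠ 0 :=
  fun h ↦ hb (by simpa using congrArg Complex.im h)

theorem inv_add_I_mul_sq_add_sq_eq_sub_inv {lam τ : ℝ} (hlam : lam ≠ 0) (hadd : τ + lam ≠ 0)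
    (hsub : τ - lam ≠ 0) (w : ℝ) :
    (((w : ℂ) + Complex.I * τ) ^ 2 + (lam : ℂ) ^ 2)⁻¹ =
      (π / lam : ℂ) * ((2 * π * (τ + lam) - 2 * π * w * Complex.I)⁻¹ -
        (2 * π * (τ - lam) - 2 * π * w * Complex.I)⁻¹) := by
  have hne {b : ℝ} (hb : b ≠ 0) : (b - w * Complex.I : ℂ) ≠ 0 := fun h ↦ by
    simpa [hb] using congrArg Complex.re h
  have hc₁ := hne hadd
  have hc₂ := hne hsub
  push_cast at hc₁ hc₂
  have hD : ((w : ℂ) + Complex.I * τ) ^ 2 + (lam : ℂ) ^ 2 ≠ 0 := by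
    rw [add_I_mul_sq_add_sq]
    exact mul_ne_zero (ofReal_add_mul_I_ne_zero w hadd) (ofReal_add_mul_I_ne_zero w hsub)
  have hl : (lam : ℂ) ≠ 0 := by exact_mod_cast hlam
  field_simp
  linear_combination 2 * (lam : ℂ) * ((τ : ℂ) ^ 2 + (w : ℂ) ^ 2) * Complex.I_sq

theorem integrable_inv_mul_add_mul_I {b c : ℝ} (hb : b ≠ 0) (hc : c ≠ 0) :
    Integrable fun w : ℝ ↦ (((w : ℂ) + b * Complex.I) * ((w : ℂ) + c * Complex.I))⁻¹ := by
  set m := min 1 |b * c|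
  have hm : 0 < m := lt_min one_pos (by positivity)
  refine (integrable_inv_one_add_sq.const_mul (2 / m)).mono' (by fun_prop) ?_
  refine .of_forall fun w ↦ ?_
  have hnorm {d : ℝ} : |w| ≤ ‖(w : ℂ) + d * Complex.I‖ ∧ |d| ≤ ‖(w : ℂ) + d * Complex.I‖ := by
    constructor
    · simpa using Complex.abs_re_le_norm ((w : ℂ) + d * Complex.I)
    · simpa using Complex.abs_im_le_norm ((w : ℂ) + d * Complex.I)
  have hlow : m * (1 + w ^ 2) / 2 ≤ ‖((w : ℂ) + b * Complex.I) * ((w : ℂ) + c * Complex.I)‖ := by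
    obtain ⟨hwb, hb'⟩ := hnorm (d := b)
    obtain ⟨hwc, hc'⟩ := hnorm (d := c)
    have hm1 : m ≤ 1 := min_le_left _ _
    have hm2 : m ≤ |b| * |c| := (min_le_right _ _).trans (abs_mul b c).le
    rw [norm_mul]
    nlinarith [abs_nonneg w, abs_nonneg b, abs_nonneg c, sq_abs w,
      mul_le_mul hwb hwc (abs_nonneg w) (norm_nonneg _),
      mul_le_mul hb' hc' (abs_nonneg c) (norm_nonneg _)]
  rw [norm_inv]
  calc _ ≤ (m * (1 + w ^ 2) / 2)⁻¹ := inv_anti₀ (by positivity) hlow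
    _ = _ := by field_simp

theorem integral_cexp_mul_div_eq_of_fourier_eq_inv {f D : ℝ → ℂ} (hf : Integrable f)
    (hF : 𝓕 f = fun ξ ↦ (D ξ)⁻¹) (hD : Integrable fun ξ ↦ (D ξ)⁻¹) {x : ℝ}
    (hx : ContinuousAt f x) :
    ∫ ξ : ℝ, Complex.exp (2 * π * Complex.I * x * ξ) / D ξ = f x := by
  rw [← hf.fourierInv_fourier_eq (hF ▸ hD) hx, hF, Real.fourierInv_eq']
  congr 1 with ξ
  simp only [RCLike.inner_apply, conj_trivial, smul_eq_mul, div_eq_mul_inv]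
  push_cast
  ring_nf

theorem integral_cexp_mul_div_sq_add_sq {lam τ x : ℝ} (hlam : lam ≠ 0) (hadd : τ + lam ≠ 0)
    (hsub : τ - lam ≠ 0)
    (hx : ContinuousAt ((π / lam : ℂ) •
      (oneSidedExp (2 * π * (τ + lam)) - oneSidedExp (2 * π * (τ - lam)))) x) :
    ∫ ξ : ℝ, Complex.exp (2 * π * Complex.I * x * ξ) / ((ξ + Complex.I * τ) ^ 2 + (lam : ℂ) ^ 2) =
      ((π / lam : ℂ) • (oneSidedExp (2 * π * (τ + lam)) - oneSidedExp (2 * π * (τ - lam)))) x := by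
  have hre {b : ℝ} (hb : b ≠ 0) : (2 * π * b : ℂ).re ≠ 0 := by
    simp [pi_ne_zero, hb]
  have hadd' := hre hadd
  have hsub' := hre hsub
  push_cast at hadd' hsub'
  refine integral_cexp_mul_div_eq_of_fourier_eq_inv
    (((integrable_oneSidedExp hadd').sub (integrable_oneSidedExp hsub')).smul _) ?_ ?_ hx
  · rw [Real.fourier_smul_sub (integrable_oneSidedExp hadd') (integrable_oneSidedExp hsub')]
    ext w
    simp only [Pi.smul_apply, Pi.sub_apply, fourier_oneSidedExp hadd', fourier_oneSidedExp hsub',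
      smul_eq_mul, inv_add_I_mul_sq_add_sq_eq_sub_inv hlam hadd hsub]
  · simp_rw [add_I_mul_sq_add_sq]
    exact integrable_inv_mul_add_mul_I hadd hsub

theorem smul_oneSidedExp_sub_of_lt {lam τ : ℝ} (hlam : 0 < lam) (hlt : lam < τ) :
    (π / lam : ℂ) • (oneSidedExp (2 * π * (τ + lam)) - oneSidedExp (2 * π * (τ - lam))) =
      fun v : ℝ ↦ (((π * Real.exp (2 * π * τ * v) / lam) *
        (Real.exp (-2 * π * lam * |v|) - Real.exp (-2 * π * lam * v)) : ℝ) : ℂ) := by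
  have hadd : 0 < (2 * π * (τ + lam) : ℂ).re := by
    simpa using mul_pos two_pi_pos (by linarith : 0 < τ + lam)
  have hsub : 0 < (2 * π * (τ - lam) : ℂ).re := by
    simpa using mul_pos two_pi_pos (sub_pos.2 hlt)
  ext v
  simp only [oneSidedExp, if_pos hadd, if_pos hsub, Pi.smul_apply, Pi.sub_apply, smul_eq_mul]
  rcases le_or_gt v 0 with hv | hv
  · simp only [indicator_of_mem (mem_Iic.2 hv), abs_of_nonpos hv]
    push_cast
    rw [mul_div_right_comm, mul_assoc (π / lam : ℂ), mul_sub (Complex.exp _), ← Complex.exp_add,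
      ← Complex.exp_add]
    ring_nf
  · simp [indicator_of_notMem (notMem_Iic.2 hv), abs_of_pos hv]

theorem smul_oneSidedExp_sub_of_gt {lam τ : ℝ} (hadd : 0 < τ + lam) (hlt : τ < lam) :
    (π / lam : ℂ) • (oneSidedExp (2 * π * (τ + lam)) - oneSidedExp (2 * π * (τ - lam))) =
      fun v : ℝ ↦
        (((π * Real.exp (2 * π * τ * v) / lam) * Real.exp (-2 * π * lam * |v|) : ℝ) : ℂ) := by
  have hadd' : 0 < (2 * π * (τ + lam) : ℂ).re := by simpa using mul_pos two_pi_pos hadd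
  have hsub : ¬ 0 < (2 * π * (τ - lam) : ℂ).re := by
    simpa using (mul_neg_of_pos_of_neg two_pi_pos (sub_neg.2 hlt)).le
  ext v
  simp only [oneSidedExp, if_pos hadd', if_neg hsub, Pi.smul_apply, Pi.sub_apply, Pi.neg_apply,
    smul_eq_mul]
  rcases le_or_gt v 0 with hv | hv
  · simp only [indicator_of_mem (mem_Iic.2 hv), indicator_of_notMem (notMem_Ioi.2 hv),
      abs_of_nonpos hv, neg_zero, sub_zero]
    push_cast
    rw [mul_div_right_comm, mul_assoc (π / lam : ℂ), ← Complex.exp_add]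
    ring_nf
  · simp only [indicator_of_notMem (notMem_Iic.2 hv), indicator_of_mem (mem_Ioi.2 hv),
      abs_of_pos hv, zero_sub, neg_neg]
    push_cast
    rw [mul_div_right_comm, mul_assoc (π / lam : ℂ), ← Complex.exp_add]
    ring_nf

theorem stmt7_general (lam τ x : ℝ) (hlam : 0 < lam) (hτ : 0 < τ) :
    (lam < τ →
      (∫ ξ : ℝ, Complex.exp (2 * π * Complex.I * x * ξ)
          / ((ξ + Complex.I * τ) ^ 2 + (lam : ℂ) ^ 2))
        = (((π * Real.exp (2 * π * τ * x) / lam)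
            * (Real.exp (-2 * π * lam * |x|) - Real.exp (-2 * π * lam * x)) : ℝ) : ℂ)) ∧
    (τ < lam →
      (∫ ξ : ℝ, Complex.exp (2 * π * Complex.I * x * ξ)
          / ((ξ + Complex.I * τ) ^ 2 + (lam : ℂ) ^ 2))
        = (((π * Real.exp (2 * π * τ * x) / lam) * Real.exp (-2 * π * lam * |x|) : ℝ) : ℂ)) := by
  constructor
  · intro hlt
    have hH := smul_oneSidedExp_sub_of_lt hlam hlt
    rw [integral_cexp_mul_div_sq_add_sq hlam.ne' (by linarith) (by linarith)
      (by rw [hH]; fun_prop), hH]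
  · intro hlt
    have hH := smul_oneSidedExp_sub_of_gt (by linarith) hlt
    rw [integral_cexp_mul_div_sq_add_sq hlam.ne' (by linarith) (by linarith)
      (by rw [hH]; fun_prop), hH]

/-- Explicit evaluation of `g_τ(x,λ) = ∫ e^{2πixξ}/((ξ+iτ)²+λ²) dξ` for `τ > 0`, `λ > 0`,
`λ ≠ τ`, in the two cases `λ < τ` and `λ > τ`. -/
theorem stmt7 (lam τ x : ℝ) (hlam : 0 < lam) (hτ : 0 < τ) (hne : lam ≠ |τ|) :
    (lam < τ →
      (∫ ξ : ℝ, Complex.exp (2 * π * Complex.I * x * ξ)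
          / ((ξ + Complex.I * τ) ^ 2 + (lam : ℂ) ^ 2))
        = (((π * Real.exp (2 * π * τ * x) / lam)
            * (Real.exp (-2 * π * lam * |x|) - Real.exp (-2 * π * lam * x)) : ℝ) : ℂ)) ∧
    (τ < lam →
      (∫ ξ : ℝ, Complex.exp (2 * π * Complex.I * x * ξ)
          / ((ξ + Complex.I * τ) ^ 2 + (lam : ℂ) ^ 2))
        = (((π * Real.exp (2 * π * τ * x) / lam) * Real.exp (-2 * π * lam * |x|) : ℝ) : ℂ)) :=
  stmt7_general lam τ x hlam hτ
end

section
/- Let d ≥ 3 and let m₁, m₂, n ∈ ℤ^d be linearly independent with m₁·n = m₂·n = 1 and |m₁|² = |m₂|² = M. Set N = |n|², P = m₁·m₂, and define p₁ = (NP−1)m₁ + (1−MN)m₂ + (M−P)n and p₂ = (1−MN)m₁ + (NP−1)m₂ + (M−P)n. Then p₁·m₁ = p₂·m₂ = 0, p₁·n = p₂·n = 0, |p₁| = |p₂|, and the set {m₁, m₂, p₁, p₂} has rank 3. -/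
/-!
Write `p₁ = (NP - 1) m₁ + (1 - MN) m₂ + (M - P) n`; then `p₂` is `p₁` with `m₁, m₂` swapped.
Expanding bilinearly with the Gram data `m₁·m₁ = m₂·m₂ = M`, `m₁·m₂ = P`, `mᵢ·n = 1`, `n·n = N`
gives `p₁·m₁ = p₁·n = 0` and `|p₁|² = (1 - MN)(M - P)(2 - N(M + P))`, which is symmetric
under the swap. Since `m₁ ≠ m₂` have equal length, `M ≠ P`, so the `n`-coefficient of `p₁` is
nonzero: `{m₁, m₂, p₁, p₂}` spans the same space as the independent triple `{m₁, m₂, n}`.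
-/

open Matrix Submodule

section Rank
variable {K V : Type*} [Field K] [AddCommGroup V] [Module K V]

lemma smul_add_smul_add_smul_mem_span (α β γ : K) (a b c : V) :
    α • a + β • b + γ • c ∈ span K {a, b, c} :=
  add_mem (add_mem (smul_mem _ _ (subset_span (by simp))) (smul_mem _ _ (subset_span (by simp))))
    (smul_mem _ _ (subset_span (by simp)))

lemma span_insert_insert_smul_add_smul_add_smul {α β γ : K} (hγ : γ ≠ 0) {a b c w : V}
    (hw : w ∈ span K {a, b, c}) :
    span K {a, b, α • a + β • b + γ • c, w} = span K {a, b, c} := by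
  set p := α • a + β • b + γ • c
  have hc : c ∈ span K {a, b, p, w} := by
    have : c = γ⁻¹ • (p - α • a - β • b) := by
      rw [show p - α • a - β • b = γ • c by simp only [p]; abel, smul_smul, inv_mul_cancel₀ hγ,
        one_smul]
    rw [this]
    exact smul_mem _ _ (sub_mem (sub_mem (subset_span (by simp))
      (smul_mem _ _ (subset_span (by simp)))) (smul_mem _ _ (subset_span (by simp))))
  apply le_antisymm
  · simp only [span_le, Set.insert_subset_iff, Set.singleton_subset_iff, SetLike.mem_coe]
    exact ⟨subset_span (by simp), subset_span (by simp),
      smul_add_smul_add_smul_mem_span α β γ a b c, hw⟩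
  · simp only [span_le, Set.insert_subset_iff, Set.singleton_subset_iff, SetLike.mem_coe]
    exact ⟨subset_span (by simp), subset_span (by simp), hc⟩

lemma finrank_span_insert_insert_smul_add_smul_add_smul {a b c w : V}
    (hind : LinearIndependent K ![a, b, c]) {α β γ : K} (hγ : γ ≠ 0)
    (hw : w ∈ span K {a, b, c}) :
    Module.finrank K (span K {a, b, α • a + β • b + γ • c, w}) = 3 := by
  rw [span_insert_insert_smul_add_smul_add_smul hγ hw,
    ← range_cons_cons_empty b c ![], ← Set.singleton_union, ← range_cons,
    finrank_span_eq_card hind, Fintype.card_fin]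

end Rank

lemma dotProduct_ne_dotProduct_self_of_ne {ι R : Type*} [Fintype ι] [CommRing R] [LinearOrder R]
    [IsStrictOrderedRing R] {a b : ι → R} (hab : a ≠ b) (h : a ⬝ᵥ a = b ⬝ᵥ b) :
    a ⬝ᵥ b ≠ a ⬝ᵥ a := by
  intro h'
  refine hab (sub_eq_zero.mp (dotProduct_self_eq_zero.mp ?_))
  simp only [sub_dotProduct, dotProduct_sub, dotProduct_comm b a]
  linear_combination -h - 2 * h'

section DotProduct
variable {ι R : Type*} [CommRing R]

/-- `perpVec M N P m₁ m₂ n` is `p₁` and `perpVec M N P m₂ m₁ n` is `p₂`. -/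
def perpVec (M N P : R) (a b c : ι → R) : ι → R :=
  (N * P - 1) • a + (1 - M * N) • b + (M - P) • c

lemma cast_perpVec (M N P : ℤ) (a b c : ι → ℤ) :
    (fun i => ((perpVec M N P a b c i : ℤ) : R)) =
      perpVec (M : R) N P (fun i => (a i : R)) (fun i => (b i : R)) (fun i => (c i : R)) := by
  ext i
  simp [perpVec]

variable [Fintype ι]

lemma sum_sq_eq_dotProduct_self (v : ι → R) : ∑ i, v i ^ 2 = v ⬝ᵥ v := by
  simp only [dotProduct, sq]

lemma smul_add_smul_add_smul_dotProduct (α β γ : R) (a b c v : ι → R) :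
    (α • a + β • b + γ • c) ⬝ᵥ v = α * (a ⬝ᵥ v) + β * (b ⬝ᵥ v) + γ * (c ⬝ᵥ v) := by
  simp only [add_dotProduct, smul_dotProduct, smul_eq_mul]

variable {M N P : R} {a b c : ι → R}

lemma perpVec_dotProduct_left (ha : a ⬝ᵥ a = M) (hab : a ⬝ᵥ b = P) (hac : a ⬝ᵥ c = 1) :
    perpVec M N P a b c ⬝ᵥ a = 0 := by
  rw [perpVec, smul_add_smul_add_smul_dotProduct, ha, dotProduct_comm b, hab, dotProduct_comm c,
    hac]
  ring

lemma perpVec_dotProduct_right (hac : a ⬝ᵥ c = 1) (hbc : b ⬝ᵥ c = 1) (hc : c ⬝ᵥ c = N) :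
    perpVec M N P a b c ⬝ᵥ c = 0 := by
  rw [perpVec, smul_add_smul_add_smul_dotProduct, hac, hbc, hc]
  ring

lemma perpVec_dotProduct_self (ha : a ⬝ᵥ a = M) (hb : b ⬝ᵥ b = M) (hab : a ⬝ᵥ b = P)
    (hac : a ⬝ᵥ c = 1) (hbc : b ⬝ᵥ c = 1) (hc : c ⬝ᵥ c = N) :
    perpVec M N P a b c ⬝ᵥ perpVec M N P a b c = (1 - M * N) * (M - P) * (2 - N * (M + P)) := by
  have hpb : perpVec M N P a b c ⬝ᵥ b = (M - P) * (2 - N * (M + P)) := by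
    rw [perpVec, smul_add_smul_add_smul_dotProduct, hab, hb, dotProduct_comm c, hbc]
    ring
  set p := perpVec M N P a b c
  calc p ⬝ᵥ p = (N * P - 1) * (a ⬝ᵥ p) + (1 - M * N) * (b ⬝ᵥ p) + (M - P) * (c ⬝ᵥ p) :=
        smul_add_smul_add_smul_dotProduct _ _ _ _ _ _ _
    _ = _ := by
        rw [dotProduct_comm a, perpVec_dotProduct_left ha hab hac, dotProduct_comm b, hpb,
          dotProduct_comm c, perpVec_dotProduct_right hac hbc hc]
        ring

end DotProduct

theorem stmt10_general (d : ℕ) (m₁ m₂ n : Fin d → ℤ)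
    (hind : LinearIndependent ℚ
      ![(fun i => (m₁ i : ℚ)), (fun i => (m₂ i : ℚ)), (fun i => (n i : ℚ))])
    (h1 : ∑ i, m₁ i * n i = 1) (h2 : ∑ i, m₂ i * n i = 1)
    (M : ℤ) (hM1 : ∑ i, (m₁ i) ^ 2 = M) (hM2 : ∑ i, (m₂ i) ^ 2 = M) :
    ∀ (N P : ℤ), N = ∑ i, (n i) ^ 2 → P = ∑ i, m₁ i * m₂ i →
    ∀ p₁ p₂ : Fin d → ℤ,
      (∀ i, p₁ i = (N * P - 1) * m₁ i + (1 - M * N) * m₂ i + (M - P) * n i) →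
      (∀ i, p₂ i = (1 - M * N) * m₁ i + (N * P - 1) * m₂ i + (M - P) * n i) →
      (∑ i, p₁ i * m₁ i = 0) ∧ (∑ i, p₂ i * m₂ i = 0) ∧
      (∑ i, p₁ i * n i = 0) ∧ (∑ i, p₂ i * n i = 0) ∧
      (∑ i, (p₁ i) ^ 2 = ∑ i, (p₂ i) ^ 2) ∧
      Module.finrank ℚ (Submodule.span ℚ
        ({(fun i => (m₁ i : ℚ)), (fun i => (m₂ i : ℚ)),
          (fun i => (p₁ i : ℚ)), (fun i => (p₂ i : ℚ))} : Set (Fin d → ℚ))) = 3 := by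
  intro N P hN hP p₁ p₂ hp₁ hp₂
  obtain rfl : p₁ = perpVec M N P m₁ m₂ n := funext fun i => by simp [perpVec, hp₁ i]
  obtain rfl : p₂ = perpVec M N P m₂ m₁ n := funext fun i => by simp [perpVec, hp₂ i, add_comm]
  simp only [sum_sq_eq_dotProduct_self] at hM1 hM2 hN ⊢
  replace hP : m₁ ⬝ᵥ m₂ = P := hP.symm
  have hP' : m₂ ⬝ᵥ m₁ = P := (dotProduct_comm _ _).trans hP
  refine ⟨perpVec_dotProduct_left hM1 hP h1, perpVec_dotProduct_left hM2 hP' h2,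
    perpVec_dotProduct_right h1 h2 hN.symm, perpVec_dotProduct_right h2 h1 hN.symm, ?_, ?_⟩
  · rw [perpVec_dotProduct_self hM1 hM2 hP h1 h2 hN.symm,
      perpVec_dotProduct_self hM2 hM1 hP' h2 h1 hN.symm, add_comm M P]
  · have hMP : (M : ℚ) - P ≠ 0 := by
      have hm : m₁ ≠ m₂ := fun h => (by decide : (0 : Fin 3) ≠ 1) (hind.injective (by simp [h]))
      have hPM := dotProduct_ne_dotProduct_self_of_ne hm (hM1.trans hM2.symm)
      rw [hP, hM1] at hPM
      exact sub_ne_zero.mpr (mod_cast hPM.symm)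
    rw [cast_perpVec, cast_perpVec]
    refine finrank_span_insert_insert_smul_add_smul_add_smul hind hMP ?_
    rw [Set.insert_comm]
    exact smul_add_smul_add_smul_mem_span _ _ _ _ _ _

/-- Construction of two vectors `p₁, p₂` orthogonal to `n` and to `m₁, m₂` respectively,
with `|p₁| = |p₂|`, such that `{m₁, m₂, p₁, p₂}` has rank `3`. -/
theorem stmt10 (d : ℕ) (hd : 3 ≤ d) (m₁ m₂ n : Fin d → ℤ)
    (hind : LinearIndependent ℚ
      ![(fun i => (m₁ i : ℚ)), (fun i => (m₂ i : ℚ)), (fun i => (n i : ℚ))])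
    (h1 : ∑ i, m₁ i * n i = 1) (h2 : ∑ i, m₂ i * n i = 1)
    (M : ℤ) (hM1 : ∑ i, (m₁ i) ^ 2 = M) (hM2 : ∑ i, (m₂ i) ^ 2 = M) :
    ∀ (N P : ℤ), N = ∑ i, (n i) ^ 2 → P = ∑ i, m₁ i * m₂ i →
    ∀ p₁ p₂ : Fin d → ℤ,
      (∀ i, p₁ i = (N * P - 1) * m₁ i + (1 - M * N) * m₂ i + (M - P) * n i) →
      (∀ i, p₂ i = (1 - M * N) * m₁ i + (N * P - 1) * m₂ i + (M - P) * n i) →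
      (∑ i, p₁ i * m₁ i = 0) ∧ (∑ i, p₂ i * m₂ i = 0) ∧
      (∑ i, p₁ i * n i = 0) ∧ (∑ i, p₂ i * n i = 0) ∧
      (∑ i, (p₁ i) ^ 2 = ∑ i, (p₂ i) ^ 2) ∧
      Module.finrank ℚ (Submodule.span ℚ
        ({(fun i => (m₁ i : ℚ)), (fun i => (m₂ i : ℚ)),
          (fun i => (p₁ i : ℚ)), (fun i => (p₂ i : ℚ))} : Set (Fin d → ℚ))) = 3 :=
  stmt10_general d m₁ m₂ n hind h1 h2 M hM1 hM2
end

section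
/- Let F(z) = Σ_{k≥0} a_k z^k be an entire function and R > 0. Define the n-th derivative majorant |F|^{(n)}(R) = (1/n!) Σ_{k≥0} |F^{(n+k)}(0)| R^k / k!. Then for any pairwise distinct points z₁, …, z_{n+1} ∈ ℂ with |z_i| ≤ R, the divided difference satisfies |F^{(n)}(z₁, …, z_{n+1})| ≤ |F|^{(n)}(R). -/
/-!
Both sides are linear in `F`, and the divided difference of a convergent Taylor series is the
series of the divided differences of its terms. At distinct points the `n`-th divided difference
of `z ^ k` vanishes for `k < n` and equals the complete homogeneous symmetric polynomial
`h_{k-n}(z₁, …, z_{n+1})` for `k ≥ n`: a sum of `C(k, n)` monomials, each of modulus at most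
`R ^ (k - n)` on the disk. As `C(n + j, n) / (n + j)! = 1 / (n! j!)`, summing these bounds gives
exactly `|F|^{(n)}(R)`, a convergent series because the Taylor series of an entire function
converges absolutely.
-/

/-- Divided differences: the list holds the points in reverse order,
`divDiff F [z_{n+1}, z_n, …, z₁] = F^{(n)}(z₁, …, z_{n+1})`. -/
noncomputable def divDiff (F : ℂ → ℂ) : List ℂ → ℂ
  | [] => 0
  | [z] => F z
  | a :: b :: l => (divDiff F (b :: l) - divDiff F (a :: l)) / (b - a)
termination_by l => l.length

/-- Divided difference `F^{(n)}(z 0, …, z n)` of a tuple. -/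
noncomputable def divDiffT (F : ℂ → ℂ) (n : ℕ) (z : Fin (n + 1) → ℂ) : ℂ :=
  divDiff F (List.ofFn z).reverse

open Nat

section DividedDifference

variable (F : ℂ → ℂ)

@[simp]
lemma divDiff_nil : divDiff F [] = 0 := by rw [divDiff]

@[simp]
lemma divDiff_singleton (z : ℂ) : divDiff F [z] = F z := by rw [divDiff]

lemma divDiff_cons_cons (a b : ℂ) (l : List ℂ) :
    divDiff F (a :: b :: l) = (divDiff F (b :: l) - divDiff F (a :: l)) / (b - a) := by
  rw [divDiff]

end DividedDifference

lemma divDiff_const_mul (c : ℂ) (g : ℂ → ℂ) :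
    ∀ l : List ℂ, divDiff (fun z => c * g z) l = c * divDiff g l
  | [] => by simp
  | [z] => by simp
  | a :: b :: l => by
    rw [divDiff_cons_cons, divDiff_cons_cons, divDiff_const_mul c g (b :: l),
      divDiff_const_mul c g (a :: l)]
    ring
termination_by l => l.length

lemma hasSum_divDiff {ι : Type*} {f : ι → ℂ → ℂ} {F : ℂ → ℂ} :
    ∀ {l : List ℂ}, (∀ z ∈ l, HasSum (fun i => f i z) (F z)) →
      HasSum (fun i => divDiff (f i) l) (divDiff F l)
  | [], _ => by simp [hasSum_zero]
  | [z], h => by simpa using h z (by simp)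
  | a :: b :: l, h => by
    have hb := hasSum_divDiff (l := b :: l) fun w hw => h w (List.mem_cons_of_mem a hw)
    have ha := hasSum_divDiff (l := a :: l) fun w hw => h w (by
      simp only [List.mem_cons] at hw ⊢; tauto)
    simpa only [divDiff_cons_cons] using (hb.sub ha).div_const (b - a)
termination_by l => l.length

section CompleteHomogeneous

variable {A : Type*} [CommRing A]

/-- The complete homogeneous symmetric polynomial `h_r` (the sum of all monomials of degree `r`)
in the entries of a list; the recursion splits on whether the first entry occurs. -/
def hsymm : ℕ → List A → A
  | 0, _ => 1
  | _ + 1, [] => 0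
  | r + 1, a :: l => a * hsymm r (a :: l) + hsymm (r + 1) l
termination_by r l => (r, l.length)

@[simp]
lemma hsymm_zero (l : List A) : hsymm 0 l = 1 := by rw [hsymm]

@[simp]
lemma hsymm_succ_nil (r : ℕ) : hsymm (r + 1) ([] : List A) = 0 := by rw [hsymm]

lemma hsymm_succ_cons (r : ℕ) (a : A) (l : List A) :
    hsymm (r + 1) (a :: l) = a * hsymm r (a :: l) + hsymm (r + 1) l := by rw [hsymm]

lemma hsymm_singleton (r : ℕ) (z : A) : hsymm r [z] = z ^ r := by
  induction r with
  | zero => simp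
  | succ r ih => rw [hsymm_succ_cons, ih, hsymm_succ_nil]; ring

lemma hsymm_succ_cons_sub (r : ℕ) (a b : A) (l : List A) :
    hsymm (r + 1) (b :: l) - hsymm (r + 1) (a :: l) = (b - a) * hsymm r (a :: b :: l) := by
  induction r with
  | zero => simp only [hsymm_succ_cons, hsymm_zero]; ring
  | succ r ih =>
    rw [hsymm_succ_cons (r + 1) b, hsymm_succ_cons (r + 1) a, hsymm_succ_cons r a (b :: l)]
    linear_combination a * ih

end CompleteHomogeneous

lemma norm_hsymm_le {A : Type*} [NormedCommRing A] [NormOneClass A] {R : ℝ} :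
    ∀ (r : ℕ) (l : List A), (∀ x ∈ l, ‖x‖ ≤ R) →
      ‖hsymm r l‖ ≤ multichoose l.length r * R ^ r
  | 0, l, _ => by simp
  | r + 1, [], _ => by simp
  | r + 1, a :: l, hl => by
    have ha : ‖a‖ ≤ R := hl a (by simp)
    have hR : 0 ≤ R := (norm_nonneg a).trans ha
    have h₁ := norm_hsymm_le r (a :: l) hl
    have h₂ := norm_hsymm_le (r + 1) l fun x hx => hl x (by simp [hx])
    calc ‖hsymm (r + 1) (a :: l)‖
        ≤ ‖a‖ * ‖hsymm r (a :: l)‖ + ‖hsymm (r + 1) l‖ := by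
          rw [hsymm_succ_cons]; exact (norm_add_le _ _).trans (by gcongr; exact norm_mul_le _ _)
      _ ≤ R * (multichoose (l.length + 1) r * R ^ r)
            + multichoose l.length (r + 1) * R ^ (r + 1) := by
          simp only [List.length_cons] at h₁; gcongr
      _ = multichoose (a :: l).length (r + 1) * R ^ (r + 1) := by
          rw [List.length_cons, multichoose_succ_succ]; push_cast; ring
termination_by r l => (r, l.length)

lemma divDiff_pow_eq_hsymm (k : ℕ) :
    ∀ (n : ℕ) (l : List ℂ), l.Nodup → l.length = n + 1 →
      divDiff (fun z => z ^ (n + k)) l = hsymm k l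
  | n, [z], _, hlen => by
    obtain rfl : n = 0 := by simpa using hlen.symm
    simp [hsymm_singleton]
  | n, a :: b :: l, hl, hlen => by
    obtain ⟨hab, hbl⟩ := List.nodup_cons.mp hl
    have hal : (a :: l).Nodup := List.nodup_cons.mpr ⟨by simp_all, (List.nodup_cons.mp hbl).2⟩
    have hn : n = l.length + 1 := by simpa using hlen.symm
    have hba : b - a ≠ 0 := sub_ne_zero.mpr fun h => hab (by simp [h])
    have e : n + k = l.length + (k + 1) := by omega
    rw [divDiff_cons_cons, e, divDiff_pow_eq_hsymm (k + 1) l.length (b :: l) hbl rfl,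
      divDiff_pow_eq_hsymm (k + 1) l.length (a :: l) hal rfl, hsymm_succ_cons_sub,
      mul_div_cancel_left₀ _ hba]
termination_by _ l => l.length

lemma divDiff_pow_eq_zero (k : ℕ) :
    ∀ l : List ℂ, l.Nodup → k + 1 < l.length → divDiff (fun z => z ^ k) l = 0
  | a :: b :: l, hl, hk => by
    obtain ⟨hab, hbl⟩ := List.nodup_cons.mp hl
    have hal : (a :: l).Nodup := List.nodup_cons.mpr ⟨by simp_all, (List.nodup_cons.mp hbl).2⟩
    rw [divDiff_cons_cons]
    rcases lt_or_eq_of_le (show k ≤ l.length by simp at hk; omega) with hk | rfl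
    · rw [divDiff_pow_eq_zero k (b :: l) hbl (by simpa),
        divDiff_pow_eq_zero k (a :: l) hal (by simpa), sub_self, zero_div]
    · -- `z ^ k` has degree `l.length`, so both divided differences are its leading coefficient
      have e := fun x (hx : (x :: l).Nodup) => divDiff_pow_eq_hsymm 0 l.length (x :: l) hx rfl
      simp only [add_zero, hsymm_zero] at e
      rw [e b hbl, e a hal, sub_self, zero_div]
termination_by l => l.length

lemma summable_norm_mul_pow_of_summable {𝕜 : Type*} [NormedField 𝕜] {a : ℕ → 𝕜} {w : 𝕜}
    (h : Summable fun k => a k * w ^ k) {r : ℝ} (hr₀ : 0 ≤ r) (hr : r < ‖w‖) :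
    Summable fun k => ‖a k‖ * r ^ k := by
  obtain ⟨M, hM⟩ := h.tendsto_atTop_zero.norm.bddAbove_range
  have hw : 0 < ‖w‖ := hr₀.trans_lt hr
  refine Summable.of_nonneg_of_le (fun k => by positivity) (fun k => ?_)
    ((summable_geometric_of_lt_one (div_nonneg hr₀ hw.le) ((div_lt_one hw).mpr hr)).mul_left M)
  calc ‖a k‖ * r ^ k = ‖a k * w ^ k‖ * (r / ‖w‖) ^ k := by
        rw [norm_mul, norm_pow, div_pow]; field_simp
    _ ≤ M * (r / ‖w‖) ^ k := by gcongr; exact hM ⟨k, rfl⟩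

lemma iteratedDeriv_iteratedDeriv {𝕜 : Type*} [NontriviallyNormedField 𝕜] (m n : ℕ)
    (f : 𝕜 → 𝕜) :
    iteratedDeriv m (iteratedDeriv n f) = iteratedDeriv (m + n) f := by
  simp only [iteratedDeriv_eq_iterate, Function.iterate_add_apply]

lemma Differentiable.hasSum_taylorSeries {F : ℂ → ℂ} (hF : Differentiable ℂ F) (z : ℂ) :
    HasSum (fun k => iteratedDeriv k F 0 / k ! * z ^ k) (F z) :=
  (Complex.hasSum_taylorSeries_of_entire hF 0 z).congr_fun fun k => by
    simp only [sub_zero, smul_eq_mul]; ring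

lemma Differentiable.summable_norm_iteratedDeriv_add_mul_pow {F : ℂ → ℂ}
    (hF : Differentiable ℂ F) (n : ℕ) {r : ℝ} (hr : 0 ≤ r) :
    Summable fun k => ‖iteratedDeriv (n + k) F 0‖ * r ^ k / k ! := by
  have hG : Differentiable ℂ (iteratedDeriv n F) := hF.contDiff.differentiable_iteratedDeriv' n
  have := summable_norm_mul_pow_of_summable (hG.hasSum_taylorSeries ((r + 1 : ℝ) : ℂ)).summable
    hr (by rw [Complex.norm_real, Real.norm_of_nonneg (by linarith)]; linarith)
  convert this using 2 with k
  rw [iteratedDeriv_iteratedDeriv, add_comm, norm_div, Complex.norm_natCast]; ring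

lemma Differentiable.hasSum_divDiff_hsymm {F : ℂ → ℂ} (hF : Differentiable ℂ F) {n : ℕ}
    {l : List ℂ} (hl : l.Nodup) (hlen : l.length = n + 1) :
    HasSum (fun k => iteratedDeriv (n + k) F 0 / (n + k)! * hsymm k l) (divDiff F l) := by
  have h := hasSum_divDiff (l := l) fun z _ => hF.hasSum_taylorSeries z
  simp only [divDiff_const_mul] at h
  rw [← hasSum_nat_add_iff' n, Finset.sum_eq_zero fun k hk => ?_, sub_zero] at h
  · exact h.congr_fun fun k => by rw [add_comm k n, divDiff_pow_eq_hsymm k n l hl hlen]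
  · rw [divDiff_pow_eq_zero k l hl (by simp at hk; omega), mul_zero]

lemma norm_div_factorial_mul_hsymm_le (a : ℂ) {n k : ℕ} {l : List ℂ} (hlen : l.length = n + 1)
    {R : ℝ} (hl : ∀ z ∈ l, ‖z‖ ≤ R) :
    ‖a / (n + k)! * hsymm k l‖ ≤ 1 / n ! * (‖a‖ * R ^ k / k !) := by
  have hchoose : ((n + k).choose n : ℝ) = (n + k)! / (n ! * k !) := Nat.cast_add_choose ℝ
  have hmult : multichoose l.length k = (n + k).choose n := by
    rw [hlen, multichoose_eq, show n + 1 + k - 1 = n + k by omega, Nat.choose_symm_add]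
  calc ‖a / (n + k)! * hsymm k l‖ ≤ ‖a‖ / (n + k)! * ((n + k).choose n * R ^ k) := by
        rw [norm_mul, norm_div, Complex.norm_natCast, ← hmult]
        gcongr; exact norm_hsymm_le k l hl
    _ = 1 / n ! * (‖a‖ * R ^ k / k !) := by
        rw [hchoose]; field_simp

theorem stmt13_general (F : ℂ → ℂ) (hF : Differentiable ℂ F) (R : ℝ)
    (n : ℕ) (z : Fin (n + 1) → ℂ) (hz : Function.Injective z) (hzR : ∀ i, ‖z i‖ ≤ R) :
    ‖divDiffT F n z‖
      ≤ (1 / (n.factorial : ℝ))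
          * ∑' k : ℕ, ‖iteratedDeriv (n + k) F 0‖ * R ^ k / (k.factorial : ℝ) := by
  set l := (List.ofFn z).reverse
  have hlen : l.length = n + 1 := by simp [l]
  have hl : l.Nodup := List.nodup_reverse.mpr (List.nodup_ofFn.mpr hz)
  have hlR : ∀ x ∈ l, ‖x‖ ≤ R := by
    intro x hx
    obtain ⟨i, rfl⟩ := List.mem_ofFn.mp (List.mem_reverse.mp hx)
    exact hzR i
  have hR : 0 ≤ R := (norm_nonneg _).trans (hzR 0)
  exact (hF.hasSum_divDiff_hsymm hl hlen).norm_le_of_bounded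
    ((hF.summable_norm_iteratedDeriv_add_mul_pow n hR).hasSum.mul_left _)
    fun k => norm_div_factorial_mul_hsymm_le _ hlen hlR

/-- The derivative majorant `|F|^{(n)}(R)` dominates the divided differences of an entire
function at points in the closed disk of radius `R`. -/
theorem stmt13 (F : ℂ → ℂ) (hF : Differentiable ℂ F) (R : ℝ) (hR : 0 < R)
    (n : ℕ) (z : Fin (n + 1) → ℂ) (hz : Function.Injective z) (hzR : ∀ i, ‖z i‖ ≤ R) :
    ‖divDiffT F n z‖
      ≤ (1 / (n.factorial : ℝ))
          * ∑' k : ℕ, ‖iteratedDeriv (n + k) F 0‖ * R ^ k / (k.factorial : ℝ) :=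
  stmt13_general F hF R n z hz hzR
end

section
/- Let F be an entire function, and let (z_i) be a sequence of pairwise distinct complex numbers converging to 0. Then for each n ≥ 0, the divided differences converge to the Taylor coefficients: lim_{m→∞} F^{(n)}(z_{m+1}, …, z_{m+n+1}) = F^{(n)}(0)/n!. -/
open Filter

open Metric Complex Real

section DivDiffCircleIntegral

variable {E : Type*} [NormedAddCommGroup E] [NormedSpace ℂ E] {c : ℂ} {R : ℝ} {F : ℂ → ℂ}

theorem circleIntegrable_listProd_inv_sub_smul {f : ℂ → E} (hR : 0 ≤ R)
    (hf : ContinuousOn f (sphere c R)) {l : List ℂ} (hl : ∀ a ∈ l, a ∉ sphere c R) :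
    CircleIntegrable (fun z => (l.map fun a => (z - a)⁻¹).prod • f z) c R := by
  refine ContinuousOn.circleIntegrable hR (ContinuousOn.smul ?_ hf)
  exact continuousOn_list_prod l fun a ha => (continuous_sub_right a).continuousOn.inv₀
    fun z hz h => hl a ha (sub_eq_zero.mp h ▸ hz)

theorem divDiff_eq_circleIntegral (hF : DiffContOnCl ℂ F (ball c R)) {l : List ℂ}
    (hne : l ≠ []) (hnd : l.Nodup) (hball : ∀ a ∈ l, a ∈ ball c R) :
    divDiff F l = (2 * π * I)⁻¹ • ∮ z in C(c, R), (l.map fun a => (z - a)⁻¹).prod • F z := by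
  induction l using divDiff.induct with
  | case1 => contradiction
  | case2 w =>
    simpa [divDiff] using
      (hF.two_pi_i_inv_smul_circleIntegral_sub_inv_smul (hball w (by simp))).symm
  | case3 a b l ihb iha =>
    have hab : a ≠ b := by simp_all
    have hR : 0 < R := pos_of_mem_ball (hball a (by simp))
    have hFs : ContinuousOn F (sphere c R) := hF.continuousOn_ball.mono sphere_subset_closedBall
    have hoff : ∀ x ∈ a :: b :: l, x ∉ sphere c R := fun x hx hs =>
      (ne_of_lt (mem_ball.mp (hball x hx))) (mem_sphere.mp hs)
    -- partial fractions: `(b - a)⁻¹ ((z - b)⁻¹ - (z - a)⁻¹) = (z - a)⁻¹ (z - b)⁻¹`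
    have hpartial : ∀ z ∈ sphere c R,
        (b - a)⁻¹ • (((b :: l).map fun x => (z - x)⁻¹).prod • F z -
          ((a :: l).map fun x => (z - x)⁻¹).prod • F z) =
        ((a :: b :: l).map fun x => (z - x)⁻¹).prod • F z := fun z hz => by
      have hza : z - a ≠ 0 := sub_ne_zero.mpr fun h => hoff a (by simp) (h ▸ hz)
      have hzb : z - b ≠ 0 := sub_ne_zero.mpr fun h => hoff b (by simp) (h ▸ hz)
      have hba : b - a ≠ 0 := sub_ne_zero.mpr hab.symm
      simp only [List.map_cons, List.prod_cons, smul_eq_mul]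
      field_simp
      ring
    rw [divDiff, ihb (by simp) (by simp_all) (by simp_all),
      iha (by simp) (by simp_all) (by simp_all), ← smul_sub, ← circleIntegral.integral_sub
        (circleIntegrable_listProd_inv_sub_smul hR.le hFs (by simp_all))
        (circleIntegrable_listProd_inv_sub_smul hR.le hFs (by simp_all)),
      div_eq_inv_mul, smul_eq_mul, smul_eq_mul, mul_left_comm, ← smul_eq_mul (b - a)⁻¹,
      ← circleIntegral.integral_smul, circleIntegral.integral_congr hR.le hpartial]

theorem divDiffT_eq_circleIntegral (hF : DiffContOnCl ℂ F (ball c R))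
    {n : ℕ} {w : Fin (n + 1) → ℂ} (hw : Function.Injective w) (hwR : ∀ i, w i ∈ ball c R) :
    divDiffT F n w = (2 * π * I)⁻¹ • ∮ z in C(c, R), (∏ i, (z - w i)⁻¹) • F z := by
  have hprod : ∀ z, ((List.ofFn w).reverse.map fun a => (z - a)⁻¹).prod = ∏ i, (z - w i)⁻¹ :=
    fun z => by rw [List.map_reverse, List.prod_reverse, List.map_ofFn, List.prod_ofFn]; rfl
  have hmem : ∀ a ∈ (List.ofFn w).reverse, a ∈ ball c R := fun a ha => by
    obtain ⟨i, rfl⟩ := List.mem_ofFn.mp (List.mem_reverse.mp ha)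
    exact hwR i
  rw [divDiffT, divDiff_eq_circleIntegral hF (by simp)
    (List.nodup_reverse.mpr (List.nodup_ofFn.mpr hw)) hmem]
  simp only [hprod]

theorem continuousOn_circleIntegral_prod_inv_sub_smul {ι : Type*} [Fintype ι] {f : ℂ → E}
    (hR : 0 ≤ R) (hf : ContinuousOn f (sphere c R)) :
    ContinuousOn (fun w : ι → ℂ => ∮ z in C(c, R), (∏ i, (z - w i)⁻¹) • f z)
      (Set.univ.pi fun _ => (sphere c R)ᶜ) := by
  rw [continuousOn_iff_continuous_domRestrict]
  refine intervalIntegral.continuous_parametric_intervalIntegral_of_continuous ?_ continuous_const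
  have hfc : Continuous fun θ => f (circleMap c R θ) :=
    hf.comp_continuous (continuous_circleMap c R) (circleMap_mem_sphere c hR)
  refine Continuous.smul ?_ (Continuous.smul ?_ (hfc.comp continuous_snd))
  · simp only [deriv_circleMap]
    fun_prop
  · refine continuous_finsetProd _ fun i _ => Continuous.inv₀ ?_ fun p h => ?_
    · exact ((continuous_circleMap c R).comp continuous_snd).sub
        ((continuous_apply i).comp (continuous_subtype_val.comp continuous_fst))
    exact p.1.2 i (Set.mem_univ i) (sub_eq_zero.mp h ▸ circleMap_mem_sphere c hR p.2)

theorem tendsto_divDiffT_iteratedDeriv_div_factorial (hF : DiffContOnCl ℂ F (ball c R))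
    (hR : 0 < R) {n : ℕ} {α : Type*} {l : Filter α} {w : α → Fin (n + 1) → ℂ}
    (hw : ∀ᶠ x in l, Function.Injective (w x)) (hlim : Tendsto w l (nhds fun _ => c)) :
    Tendsto (fun x => divDiffT F n (w x)) l (nhds (iteratedDeriv n F c / n.factorial)) := by
  have hsphere : Set.univ.pi (fun _ => (sphere c R)ᶜ) ∈ nhds fun _ : Fin (n + 1) => c :=
    set_pi_mem_nhds Set.finite_univ fun _ _ =>
      isClosed_sphere.isOpen_compl.mem_nhds (by simpa using hR.ne)
  have hball : Set.univ.pi (fun _ => ball c R) ∈ nhds fun _ : Fin (n + 1) => c :=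
    set_pi_mem_nhds Set.finite_univ fun _ _ => ball_mem_nhds c hR
  have hint := ((continuousOn_circleIntegral_prod_inv_sub_smul hR.le
    (hF.continuousOn_ball.mono sphere_subset_closedBall)).continuousAt hsphere).tendsto.comp hlim
  have hcauchy : (2 * π * I)⁻¹ • ∮ z in C(c, R), (∏ _i : Fin (n + 1), (z - c)⁻¹) • F z =
      iteratedDeriv n F c / n.factorial := by
    have hkernel : ∀ z, ∏ _i : Fin (n + 1), (z - c)⁻¹ = 1 / (z - c) ^ (n + 1) := by simp
    simp_rw [hkernel]
    rw [hF.circleIntegral_one_div_sub_center_pow_smul hR n, smul_smul, smul_eq_mul]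
    field_simp [two_pi_I_ne_zero]
  rw [← hcauchy]
  refine (hint.const_smul _).congr' ?_
  filter_upwards [hw, hlim.eventually_mem hball] with x hinj hx
  exact (divDiffT_eq_circleIntegral hF hinj fun i => hx i (Set.mem_univ i)).symm

end DivDiffCircleIntegral

/-- Divided differences of an entire function along a sequence of pairwise distinct points
tending to `0` converge to the Taylor coefficients. -/
theorem stmt14 (F : ℂ → ℂ) (hF : Differentiable ℂ F) (z : ℕ → ℂ)
    (hinj : Function.Injective z) (hz : Tendsto z atTop (nhds 0)) (n : ℕ) :
    Tendsto (fun m : ℕ => divDiffT F n (fun i : Fin (n + 1) => z (m + 1 + (i : ℕ))))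
      atTop (nhds (iteratedDeriv n F 0 / (n.factorial : ℂ))) := by
  have hshift : ∀ i : Fin (n + 1), Tendsto (fun m : ℕ => m + 1 + (i : ℕ)) atTop atTop :=
    fun i => tendsto_atTop_mono (fun m => show m ≤ m + 1 + i by omega) tendsto_id
  refine tendsto_divDiffT_iteratedDeriv_div_factorial (hF.diffContOnCl (s := ball 0 1)) one_pos
    (Eventually.of_forall fun m i j hij => Fin.ext ?_)
    (tendsto_pi_nhds.mpr fun i => hz.comp (hshift i))
  have := hinj hij
  omega
end

section
/- Let F be an entire function and (z_i) a sequence of pairwise distinct complex numbers with z_i → 0 and |z_i| ≤ R. Then the Newton series Σ_{n=0}^{∞} F^{(n)}(z₁, …, z_{n+1}) ∏_{m=1}^{n} (z − z_m) converges absolutely and uniformly on compact subsets of ℂ, and its sum equals F(z) for every z ∈ ℂ. -/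
open Filter

open Metric Complex Real

namespace Newton

theorem divDiff_singleton (F : ℂ → ℂ) (a : ℂ) : divDiff F [a] = F a := by
  rw [divDiff]

theorem divDiff_cons_cons (F : ℂ → ℂ) (a b : ℂ) (l : List ℂ) :
    divDiff F (a :: b :: l) = (divDiff F (b :: l) - divDiff F (a :: l)) / (b - a) := by
  rw [divDiff]

noncomputable def nodeProd (l : List ℂ) (ζ : ℂ) : ℂ := (l.map (ζ - ·)).prod

@[simp] theorem nodeProd_nil (ζ : ℂ) : nodeProd [] ζ = 1 := rfl

@[simp] theorem nodeProd_cons (a : ℂ) (l : List ℂ) (ζ : ℂ) :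
    nodeProd (a :: l) ζ = (ζ - a) * nodeProd l ζ := rfl

theorem continuous_nodeProd (l : List ℂ) : Continuous (nodeProd l) := by
  induction l with
  | nil => exact continuous_const
  | cons a l ih => exact (continuous_id.sub continuous_const).mul ih

theorem nodeProd_ne_zero {l : List ℂ} {ζ : ℂ} (h : ζ ∉ l) : nodeProd l ζ ≠ 0 := by
  simp only [nodeProd, ne_eq, List.prod_eq_zero_iff, List.mem_map, sub_eq_zero, not_exists,
    not_and]
  rintro p hp rfl
  exact h hp

theorem pow_le_norm_nodeProd {l : List ℂ} {c ζ : ℂ} {ρ r : ℝ} (hζ : ‖ζ - c‖ = r) (hρr : ρ ≤ r)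
    (hl : ∀ p ∈ l, ‖p - c‖ ≤ ρ) : (r - ρ) ^ l.length ≤ ‖nodeProd l ζ‖ := by
  induction l with
  | nil => simp
  | cons a l ih =>
    have ha : r - ρ ≤ ‖ζ - a‖ := by
      have := norm_sub_norm_le (ζ - c) (a - c)
      rw [sub_sub_sub_cancel_right] at this
      linarith [hl a (by simp)]
    rw [nodeProd_cons, norm_mul, List.length_cons, pow_succ']
    exact mul_le_mul ha (ih fun p hp => hl p (by simp [hp])) (by positivity) (by positivity)

theorem inv_nodeProd_sub_inv_nodeProd {a b ζ : ℂ} (ha : ζ ≠ a) (hb : ζ ≠ b) (l : List ℂ) :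
    (nodeProd (b :: l) ζ)⁻¹ - (nodeProd (a :: l) ζ)⁻¹ = (b - a) * (nodeProd (a :: b :: l) ζ)⁻¹ := by
  have ha' : ζ - a ≠ 0 := sub_ne_zero.2 ha
  have hb' : ζ - b ≠ 0 := sub_ne_zero.2 hb
  simp only [nodeProd_cons, mul_inv]
  field_simp
  ring

section Contour

variable {F : ℂ → ℂ} {c : ℂ} {r : ℝ}

theorem circleIntegrable_inv_nodeProd_smul (hF : ContinuousOn F (sphere c r)) {l : List ℂ}
    (hl : ∀ p ∈ l, p ∉ sphere c r) (hr : 0 ≤ r) :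
    CircleIntegrable (fun ζ => (nodeProd l ζ)⁻¹ • F ζ) c r := by
  refine ContinuousOn.circleIntegrable hr (ContinuousOn.smul (f := fun ζ => (nodeProd l ζ)⁻¹) ?_ hF)
  exact (continuous_nodeProd l).continuousOn.inv₀ fun ζ hζ => nodeProd_ne_zero fun h => hl ζ h hζ

/-- Hermite's formula. -/
theorem divDiff_eq_circleIntegral (hF : DifferentiableOn ℂ F (closedBall c r)) :
    ∀ l : List ℂ, l ≠ [] → l.Nodup → (∀ p ∈ l, p ∈ ball c r) →
      divDiff F l = (2 * π * I)⁻¹ • ∮ ζ in C(c, r), (nodeProd l ζ)⁻¹ • F ζ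
  | [], h, _, _ => absurd rfl h
  | [a], _, _, hl => by
    rw [divDiff_singleton, ← (hF.mono closure_ball_subset_closedBall).diffContOnCl
      |>.two_pi_i_inv_smul_circleIntegral_sub_inv_smul (hl a (by simp))]
    simp
  | a :: b :: l, _, hnd, hl => by
    have hab : b - a ≠ 0 := sub_ne_zero.2 fun h => by simp_all
    have hsub : (a :: l).Sublist (a :: b :: l) := (List.sublist_cons_self b l).cons_cons a
    have hr : 0 ≤ r := (dist_nonneg).trans (mem_ball.1 (hl a (by simp))).le
    have hsphere : ∀ p ∈ a :: b :: l, p ∉ sphere c r := fun p hp h =>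
      (mem_ball.1 (hl p hp)).ne (mem_sphere.1 h)
    have hFs : ContinuousOn F (sphere c r) := hF.continuousOn.mono sphere_subset_closedBall
    rw [divDiff_cons_cons, divDiff_eq_circleIntegral hF (b :: l) (by simp) hnd.of_cons
        fun p hp => hl p (List.mem_cons_of_mem _ hp),
      divDiff_eq_circleIntegral hF (a :: l) (by simp) (hnd.sublist hsub)
        fun p hp => hl p (hsub.subset hp), div_eq_iff hab, ← smul_sub,
      ← circleIntegral.integral_sub
        (circleIntegrable_inv_nodeProd_smul hFs
          (fun p hp => hsphere p (List.mem_cons_of_mem _ hp)) hr)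
        (circleIntegrable_inv_nodeProd_smul hFs (fun p hp => hsphere p (hsub.subset hp)) hr)]
    have hcongr : ∀ ζ ∈ sphere c r, (nodeProd (b :: l) ζ)⁻¹ • F ζ - (nodeProd (a :: l) ζ)⁻¹ • F ζ
        = (b - a) • ((nodeProd (a :: b :: l) ζ)⁻¹ • F ζ) := fun ζ hζ => by
      rw [← sub_smul, inv_nodeProd_sub_inv_nodeProd (fun h : ζ = a => hsphere a (by simp) (h ▸ hζ))
        (fun h : ζ = b => hsphere b (by simp) (h ▸ hζ)), smul_smul]
    rw [circleIntegral.integral_congr hr hcongr, circleIntegral.integral_smul, smul_comm,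
      smul_eq_mul, mul_comm]
termination_by l => l.length

theorem norm_divDiff_le (hF : DifferentiableOn ℂ F (closedBall c r)) {ρ M : ℝ} (hρr : ρ < r)
    (hM : ∀ ζ ∈ sphere c r, ‖F ζ‖ ≤ M) {l : List ℂ} (hne : l ≠ []) (hnd : l.Nodup)
    (hl : ∀ p ∈ l, ‖p - c‖ ≤ ρ) : ‖divDiff F l‖ ≤ r * M / (r - ρ) ^ l.length := by
  have hr : 0 ≤ r := ((norm_nonneg _).trans (hl _ (List.head_mem hne))).trans hρr.le
  have hpow : 0 < (r - ρ) ^ l.length := pow_pos (sub_pos.2 hρr) _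
  have hbound : ∀ ζ ∈ sphere c r, ‖(nodeProd l ζ)⁻¹ • F ζ‖ ≤ M / (r - ρ) ^ l.length :=
    fun ζ hζ => by
      rw [norm_smul, norm_inv, inv_mul_eq_div]
      exact div_le_div₀ ((norm_nonneg _).trans (hM ζ hζ)) (hM ζ hζ) hpow
        (pow_le_norm_nodeProd (mem_sphere_iff_norm.1 hζ) hρr.le hl)
  rw [divDiff_eq_circleIntegral hF l hne hnd fun p hp =>
    mem_ball_iff_norm.2 ((hl p hp).trans_lt hρr), mul_div_assoc]
  exact circleIntegral.norm_two_pi_i_inv_smul_integral_le_of_norm_le_const hr hbound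

end Contour

theorem exists_norm_divDiff_le {F : ℂ → ℂ} (hF : Differentiable ℂ F) (ρ : ℝ) :
    ∃ C, ∀ l : List ℂ, l ≠ [] → l.Nodup → (∀ p ∈ l, ‖p‖ ≤ ρ) →
      ‖divDiff F l‖ ≤ C / (ρ + 1) ^ l.length := by
  obtain ⟨M, hM⟩ := (isCompact_sphere (0 : ℂ) (2 * ρ + 1)).exists_bound_of_continuousOn
    hF.continuous.continuousOn
  refine ⟨(2 * ρ + 1) * M, fun l hne hnd hl => ?_⟩
  have hρ : 0 ≤ ρ := (norm_nonneg _).trans (hl _ (List.head_mem hne))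
  have h := norm_divDiff_le hF.differentiableOn (by linarith) hM hne hnd
    (fun p hp => (sub_zero p).symm ▸ hl p hp)
  rwa [show 2 * ρ + 1 - ρ = ρ + 1 by ring] at h

noncomputable def nodes (z : ℕ → ℂ) (N : ℕ) : List ℂ := (List.ofFn fun i : Fin N => z i).reverse

theorem nodes_succ (z : ℕ → ℂ) (N : ℕ) : nodes z (N + 1) = z N :: nodes z N := by
  rw [nodes, List.ofFn_succ']
  simp [nodes]

@[simp] theorem length_nodes (z : ℕ → ℂ) (N : ℕ) : (nodes z N).length = N := by simp [nodes]

theorem mem_nodes {z : ℕ → ℂ} {N : ℕ} {p : ℂ} : p ∈ nodes z N ↔ ∃ i < N, z i = p := by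
  simp [nodes, List.mem_ofFn, Fin.exists_iff]

theorem nodup_nodes {z : ℕ → ℂ} (hz : Function.Injective z) (N : ℕ) : (nodes z N).Nodup :=
  List.nodup_reverse.2 (List.nodup_ofFn.2 fun _ _ h => Fin.ext (hz h))

noncomputable def newtonTerm (F : ℂ → ℂ) (z : ℕ → ℂ) (n : ℕ) (w : ℂ) : ℂ :=
  divDiffT F n (fun i : Fin (n + 1) => z i) * ∏ m ∈ Finset.range n, (w - z m)

theorem divDiffT_eq_divDiff_nodes (F : ℂ → ℂ) (z : ℕ → ℂ) (n : ℕ) :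
    divDiffT F n (fun i : Fin (n + 1) => z i) = divDiff F (nodes z (n + 1)) := rfl

theorem sub_sum_newtonTerm (F : ℂ → ℂ) (z : ℕ → ℂ) (w : ℂ) :
    ∀ N, (∀ i < N, z i ≠ w) → F w - ∑ n ∈ Finset.range N, newtonTerm F z n w =
      divDiff F (w :: nodes z N) * ∏ m ∈ Finset.range N, (w - z m)
  | 0, _ => by simp [nodes, divDiff_singleton]
  | N + 1, hw => by
    have hzw : z N - w ≠ 0 := sub_ne_zero.2 (hw N N.lt_succ_self)
    rw [Finset.sum_range_succ, ← sub_sub,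
      sub_sum_newtonTerm F z w N fun i hi => hw i (hi.trans N.lt_succ_self), newtonTerm,
      divDiffT_eq_divDiff_nodes, nodes_succ,
      divDiff_cons_cons, Finset.prod_range_succ]
    field_simp
    ring

section Convergence

variable {F : ℂ → ℂ} {z : ℕ → ℂ} {R : ℝ}

theorem norm_prod_sub_le (hzR : ∀ i, ‖z i‖ ≤ R) (w : ℂ) (n : ℕ) :
    ‖∏ m ∈ Finset.range n, (w - z m)‖ ≤ (‖w‖ + R) ^ n := by
  calc ‖∏ m ∈ Finset.range n, (w - z m)‖ = ∏ m ∈ Finset.range n, ‖w - z m‖ := norm_prod _ _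
    _ ≤ ∏ _m ∈ Finset.range n, (‖w‖ + R) :=
      Finset.prod_le_prod (fun _ _ => norm_nonneg _) fun m _ =>
        (norm_sub_le w (z m)).trans (add_le_add_right (hzR m) _)
    _ = (‖w‖ + R) ^ n := by rw [Finset.prod_const, Finset.card_range]

theorem exists_geometric_bound_newton (hF : Differentiable ℂ F) (hinj : Function.Injective z)
    (hzR : ∀ i, ‖z i‖ ≤ R) {A : ℝ} (hA : 0 ≤ A) :
    ∃ C q : ℝ, 0 ≤ q ∧ q < 1 ∧ ∀ w, ‖w‖ ≤ A → ∀ n, ‖newtonTerm F z n w‖ ≤ C * q ^ n ∧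
      (w ∉ Set.range z → ‖F w - ∑ m ∈ Finset.range n, newtonTerm F z m w‖ ≤ C * q ^ n) := by
  have hR : 0 ≤ R := (norm_nonneg _).trans (hzR 0)
  set ρ := A + R
  obtain ⟨C, hC⟩ := exists_norm_divDiff_le hF ρ
  have key : ∀ w, ‖w‖ ≤ A → ∀ n (l : List ℂ), l.length = n + 1 → l.Nodup →
      (∀ p ∈ l, ‖p‖ ≤ ρ) →
      ‖divDiff F l * ∏ m ∈ Finset.range n, (w - z m)‖ ≤ C / (ρ + 1) * (ρ / (ρ + 1)) ^ n := by
    intro w hw n l hlen hnd hl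
    have hl' := hC l (List.ne_nil_of_length_eq_add_one hlen) hnd hl
    rw [hlen] at hl'
    calc ‖divDiff F l * ∏ m ∈ Finset.range n, (w - z m)‖
        ≤ C / (ρ + 1) ^ (n + 1) * ρ ^ n := by
          rw [norm_mul]
          exact mul_le_mul hl' ((norm_prod_sub_le hzR w n).trans (by unfold ρ; gcongr))
            (norm_nonneg _) ((norm_nonneg _).trans hl')
      _ = C / (ρ + 1) * (ρ / (ρ + 1)) ^ n := by
          rw [div_pow, pow_succ]
          field_simp
  refine ⟨C / (ρ + 1), ρ / (ρ + 1), by positivity, (div_lt_one (by positivity)).2 (by linarith),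
    fun w hw n => ⟨?_, fun hwz => ?_⟩⟩
  · exact key w hw n _ (length_nodes z _) (nodup_nodes hinj _) fun p hp => by
      obtain ⟨i, -, rfl⟩ := mem_nodes.1 hp
      exact (hzR i).trans (le_add_of_nonneg_left hA)
  · rw [sub_sum_newtonTerm F z w n fun i _ h => hwz ⟨i, h⟩]
    refine key w hw n _ (by simp) (List.nodup_cons.2 ⟨fun h => ?_, nodup_nodes hinj n⟩) ?_
    · obtain ⟨i, -, rfl⟩ := mem_nodes.1 h
      exact hwz ⟨i, rfl⟩
    · intro p hp
      rcases List.mem_cons.1 hp with rfl | hp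
      · exact hw.trans (le_add_of_nonneg_right hR)
      · obtain ⟨i, -, rfl⟩ := mem_nodes.1 hp
        exact (hzR i).trans (le_add_of_nonneg_left hA)

theorem summable_norm_newtonTerm (hF : Differentiable ℂ F) (hinj : Function.Injective z)
    (hzR : ∀ i, ‖z i‖ ≤ R) (w : ℂ) : Summable fun n => ‖newtonTerm F z n w‖ := by
  obtain ⟨C, q, hq0, hq1, hbound⟩ := exists_geometric_bound_newton hF hinj hzR (norm_nonneg w)
  exact .of_nonneg_of_le (fun _ => norm_nonneg _) (fun n => (hbound w le_rfl n).1)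
    ((summable_geometric_of_lt_one hq0 hq1).mul_left C)

theorem tendstoUniformlyOn_newtonTerm (hF : Differentiable ℂ F) (hinj : Function.Injective z)
    (hzR : ∀ i, ‖z i‖ ≤ R) {K : Set ℂ} (hK : IsCompact K) :
    TendstoUniformlyOn (fun N w => ∑ n ∈ Finset.range N, newtonTerm F z n w)
      (fun w => ∑' n, newtonTerm F z n w) atTop K := by
  obtain ⟨A, hKA⟩ := hK.isBounded.subset_closedBall 0
  obtain ⟨C, q, hq0, hq1, hbound⟩ :=
    exists_geometric_bound_newton hF hinj hzR (le_max_right A 0)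
  refine tendstoUniformlyOn_tsum_nat ((summable_geometric_of_lt_one hq0 hq1).mul_left C)
    fun n w hw => (hbound w ?_ n).1
  exact (mem_closedBall_zero_iff.1 (hKA hw)).trans (le_max_left A 0)

theorem hasSum_newtonTerm_of_notMem_range (hF : Differentiable ℂ F)
    (hinj : Function.Injective z) (hzR : ∀ i, ‖z i‖ ≤ R) {w : ℂ} (hw : w ∉ Set.range z) :
    HasSum (fun n => newtonTerm F z n w) (F w) := by
  obtain ⟨C, q, hq0, hq1, hbound⟩ := exists_geometric_bound_newton hF hinj hzR (norm_nonneg w)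
  rw [(summable_norm_newtonTerm hF hinj hzR w).of_norm.hasSum_iff_tendsto_nat,
    tendsto_iff_norm_sub_tendsto_zero]
  refine squeeze_zero (fun _ => norm_nonneg _) (fun N => ?_)
    (by simpa using (tendsto_pow_atTop_nhds_zero_of_lt_one hq0 hq1).const_mul C)
  rw [norm_sub_rev]
  exact (hbound w le_rfl N).2 hw

theorem tsum_newtonTerm (hF : Differentiable ℂ F) (hinj : Function.Injective z)
    (hzR : ∀ i, ‖z i‖ ≤ R) : (fun w => ∑' n, newtonTerm F z n w) = F := by
  have hcont : Continuous fun w => ∑' n, newtonTerm F z n w :=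
    (tendstoLocallyUniformly_iff_forall_isCompact.2
      fun K hK => tendstoUniformlyOn_newtonTerm hF hinj hzR hK).continuous
      (Frequently.of_forall fun N => continuous_finsetSum _ fun n _ =>
        continuous_const.mul (continuous_finsetProd _ fun m _ =>
          continuous_id.sub continuous_const))
  exact hcont.ext_on ((Set.countable_range z).dense_compl ℂ) hF.continuous
    fun w hw => (hasSum_newtonTerm_of_notMem_range hF hinj hzR hw).tsum_eq

end Convergence

end Newton

open Newton in
theorem stmt16_general (F : ℂ → ℂ) (hF : Differentiable ℂ F) (z : ℕ → ℂ) (R : ℝ)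
    (hinj : Function.Injective z) (hzR : ∀ i, ‖z i‖ ≤ R) :
    (∀ w : ℂ, Summable (fun n : ℕ =>
        ‖divDiffT F n (fun i : Fin (n + 1) => z (i : ℕ))
            * ∏ m ∈ Finset.range n, (w - z m)‖)) ∧
    (∀ w : ℂ, HasSum (fun n : ℕ =>
        divDiffT F n (fun i : Fin (n + 1) => z (i : ℕ))
          * ∏ m ∈ Finset.range n, (w - z m)) (F w)) ∧
    (∀ K : Set ℂ, IsCompact K → TendstoUniformlyOn
        (fun (N : ℕ) (w : ℂ) => ∑ n ∈ Finset.range N,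
          divDiffT F n (fun i : Fin (n + 1) => z (i : ℕ))
            * ∏ m ∈ Finset.range n, (w - z m))
        F atTop K) := by
  have hsum := tsum_newtonTerm hF hinj hzR
  refine ⟨summable_norm_newtonTerm hF hinj hzR, fun w => ?_, fun K hK => ?_⟩
  · exact congrFun hsum w ▸ (summable_norm_newtonTerm hF hinj hzR w).of_norm.hasSum
  · have h := tendstoUniformlyOn_newtonTerm hF hinj hzR hK
    rw [hsum] at h
    exact h

/-- The Newton series of an entire function along a sequence of pairwise distinct points
`z_i → 0`, `|z_i| ≤ R`, converges absolutely, uniformly on compact sets, and its sum is `F`. -/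
theorem stmt16 (F : ℂ → ℂ) (hF : Differentiable ℂ F) (z : ℕ → ℂ) (R : ℝ)
    (hinj : Function.Injective z) (hz : Tendsto z atTop (nhds 0)) (hzR : ∀ i, ‖z i‖ ≤ R) :
    (∀ w : ℂ, Summable (fun n : ℕ =>
        ‖divDiffT F n (fun i : Fin (n + 1) => z (i : ℕ))
            * ∏ m ∈ Finset.range n, (w - z m)‖)) ∧
    (∀ w : ℂ, HasSum (fun n : ℕ =>
        divDiffT F n (fun i : Fin (n + 1) => z (i : ℕ))
          * ∏ m ∈ Finset.range n, (w - z m)) (F w)) ∧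
    (∀ K : Set ℂ, IsCompact K → TendstoUniformlyOn
        (fun (N : ℕ) (w : ℂ) => ∑ n ∈ Finset.range N,
          divDiffT F n (fun i : Fin (n + 1) => z (i : ℕ))
            * ∏ m ∈ Finset.range n, (w - z m))
        F atTop K) :=
  stmt16_general F hF z R hinj hzR
end
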